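/- arXiv:2301.01155 — 7 statements merged into one kernel-verified Lean document; each statement's English description precedes it below -/
import Mathlib

section
/- For every i = 1, …, s, the subgroup k·M_i = {k·m : m ∈ M_i} of ℚ^n equals the subgroup kℤ^n + ℤγ_1 + … + ℤγ_i. -/
theorem stmt_2
    (n s : ℕ) (hn : 1 ≤ n) (hs : 1 ≤ s)
    (lam : ℕ → (Fin n → ℚ))
    (hlam_nonneg : ∀ i, 1 ≤ i → i ≤ s → 0 ≤ lam i)
    (hlam_mono : ∀ i, 1 ≤ i → i < s → lam i < lam (i + 1))
    (M : ℕ → AddSubgroup (Fin n → ℚ))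
    (hM : ∀ i, M i = AddSubgroup.closure
      ({x : Fin n → ℚ | ∃ v : Fin n → ℤ, x = fun j => (v j : ℚ)} ∪ (lam '' Set.Icc 1 i)))
    (hlamM : ∀ i, 1 ≤ i → i ≤ s → lam i ∉ M (i - 1))
    (kk : ℕ → ℕ)
    (hkk : ∀ i, 1 ≤ i → i ≤ s →
      IsLeast {m : ℕ | 0 < m ∧ (m : ℚ) • lam i ∈ M (i - 1)} (kk i))
    (e : ℕ → ℕ) (he0 : e 0 = 1)
    (he : ∀ i, 1 ≤ i → i ≤ s → e i = kk i * e (i - 1))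
    (gam : ℕ → ℕ → (Fin n → ℚ))
    (hgam1 : ∀ i, 1 ≤ i → i ≤ s → gam i 1 = (e i : ℚ) • lam 1)
    (hgam : ∀ i, 1 ≤ i → i ≤ s → ∀ j, 1 ≤ j → j ≤ i - 1 →
      gam i (j + 1) =
        (kk j : ℚ) • gam i j - (e i : ℚ) • lam j + (e i : ℚ) • lam (j + 1)) :
    ∀ i, 1 ≤ i → i ≤ s →
      {x : Fin n → ℚ | ∃ m ∈ M i, x = (e s : ℚ) • m} =
      (AddSubgroup.closure
        ((Set.range fun j : Fin n => Pi.single j (e s : ℚ)) ∪ (gam s '' Set.Icc 1 i)) :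
          Set (Fin n → ℚ)) := by
  intro i hi1 his
  set k : ℚ := (e s : ℚ) with hkdef
  set f : (Fin n → ℚ) →+ (Fin n → ℚ) := DistribMulAction.toAddMonoidHom (Fin n → ℚ) k with hf
  have hfapp : ∀ x : Fin n → ℚ, f x = k • x := fun x => rfl
  set S : Set (Fin n → ℚ) := {x | ∃ v : Fin n → ℤ, x = fun j => (v j : ℚ)} with hSdef
  set L : Set (Fin n → ℚ) := lam '' Set.Icc 1 i with hLdef
  set T : Set (Fin n → ℚ) := Set.range fun j : Fin n => Pi.single j k with hTdef
  set G : Set (Fin n → ℚ) := gam s '' Set.Icc 1 i with hGdef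
  have hset : {x : Fin n → ℚ | ∃ m ∈ M i, x = k • m} = ((M i).map f : Set (Fin n → ℚ)) := by
    ext x
    simp only [Set.mem_setOf_eq, SetLike.mem_coe, AddSubgroup.mem_map, hfapp, eq_comm]
  have hmap : (M i).map f = AddSubgroup.closure (T ∪ G) := by
    rw [hM i, AddMonoidHom.map_closure f]
    -- gam s j membership in closures:
    have hGmem : ∀ j, 1 ≤ j → j ≤ i → gam s j ∈ AddSubgroup.closure (T ∪ G) := by
      intro j h1 h2
      exact AddSubgroup.subset_closure (Or.inr ⟨j, ⟨h1, h2⟩, rfl⟩)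
    -- k • lam j ∈ closure (T ∪ G)
    have hB : ∀ j, 1 ≤ j → j ≤ i → k • lam j ∈ AddSubgroup.closure (T ∪ G) := by
      intro j
      induction j with
      | zero => exact fun h => absurd h (by omega)
      | succ j ih =>
        intro h1 h2
        rcases Nat.eq_zero_or_pos j with hj0 | hj1
        · subst hj0
          have : gam s 1 = k • lam 1 := hgam1 s hs le_rfl
          rw [← this]
          exact hGmem 1 le_rfl (by omega)
        · have hrec := hgam s hs le_rfl j hj1 (by omega)
          have heq : k • lam (j + 1) =
              gam s (j + 1) - (kk j : ℚ) • gam s j + k • lam j := by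
            rw [hrec]; module
          rw [heq]
          refine add_mem (sub_mem (hGmem (j+1) (by omega) h2) ?_) (ih hj1 (by omega))
          rw [Nat.cast_smul_eq_nsmul]
          exact nsmul_mem (hGmem j hj1 (by omega)) _
    apply le_antisymm
    · rw [AddSubgroup.closure_le]
      rintro _ ⟨x, hx, rfl⟩
      rcases hx with hxS | hxL
      · obtain ⟨v, rfl⟩ := hxS
        have key : f (fun j : Fin n => (v j : ℚ)) =
            ∑ j : Fin n, v j • (Pi.single j k : Fin n → ℚ) := by
          rw [hfapp]
          funext m
          simp [Finset.sum_apply, Pi.single_apply, mul_comm]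
        rw [key, SetLike.mem_coe]
        refine sum_mem fun j _ => zsmul_mem ?_ _
        exact AddSubgroup.subset_closure (Set.mem_union_left _ ⟨j, rfl⟩)
      · obtain ⟨j, ⟨hj1, hj2⟩, rfl⟩ := hxL
        rw [hfapp]
        exact hB j hj1 hj2
    · rw [AddSubgroup.closure_le]
      rintro x (hxT | hxG)
      · obtain ⟨j, rfl⟩ := hxT
        show (Pi.single j k : Fin n → ℚ) ∈ _
        have h1 : (fun m => (((Pi.single j 1 : Fin n → ℤ)) m : ℚ)) =
            (Pi.single j (1:ℚ) : Fin n → ℚ) := by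
          funext m; simp [Pi.single_apply]
        have h2 : f (Pi.single j (1:ℚ) : Fin n → ℚ) = Pi.single j k := by
          rw [hfapp, ← Pi.single_smul]; simp
        rw [← h2, ← h1]
        exact AddSubgroup.subset_closure ⟨_, Or.inl ⟨Pi.single j 1, rfl⟩, rfl⟩
      · obtain ⟨j, ⟨hj1, hj2⟩, rfl⟩ := hxG
        rw [SetLike.mem_coe]
        induction j with
        | zero => omega
        | succ j ih =>
          have hlamMem : ∀ m, 1 ≤ m → m ≤ i →
              k • lam m ∈ AddSubgroup.closure (f '' (S ∪ L)) := by
            intro m hm1 hm2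
            rw [← hfapp]
            exact AddSubgroup.subset_closure ⟨lam m, Or.inr ⟨m, ⟨hm1, hm2⟩, rfl⟩, rfl⟩
          rcases Nat.eq_zero_or_pos j with hj0 | hjp
          · subst hj0
            rw [hgam1 s hs le_rfl]
            exact hlamMem 1 le_rfl (by omega)
          · rw [hgam s hs le_rfl j hjp (by omega)]
            refine add_mem (sub_mem ?_ (hlamMem j hjp (by omega)))
              (hlamMem (j+1) (by omega) hj2)
            rw [Nat.cast_smul_eq_nsmul]
            exact nsmul_mem (ih hjp (by omega)) _
  rw [hset, hmap]
end

section
/- Let 1 ≤ i ≤ s and let a ∈ kℤ^n + ℤγ_1 + … + ℤγ_i. Then there exist integers α_1, …, α_n and β_1, …, β_i with 0 ≤ β_j ≤ k_j − 1 for all j = 1, …, i, such that a = Σ_{j=1}^{n} α_j·(k·u_j) + Σ_{j=1}^{i} β_j·γ_j. Moreover, if a ≥ Σ_{j=1}^{i}(k_j − 1)·γ_j in the componentwise order, then α_j ≥ 0 for all j = 1, …, n. -/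
/-!
Write `Lₘ = kℤⁿ + ℤγ₁ + ⋯ + ℤγₘ`. The recursion gives `γⱼ - kλⱼ ∈ Lⱼ₋₁`, hence `kλⱼ ∈ Lⱼ` and
`k·Mⱼ₋₁ ⊆ Lⱼ₋₁`; as `kⱼλⱼ ∈ Mⱼ₋₁`, this yields `kⱼγⱼ = kⱼ(γⱼ - kλⱼ) + k(kⱼλⱼ) ∈ Lⱼ₋₁`.
So in a representation of `a ∈ Lₘ` the coefficient of `γₘ` may be reduced modulo `kₘ`, the
multiple of `kₘγₘ` being absorbed into `Lₘ₋₁`, and induction on `m` gives `0 ≤ βⱼ < kⱼ`.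
Since the `λⱼ` increase, the `γⱼ` are nonnegative, so `a ≥ ∑ (kⱼ - 1)γⱼ` forces `kα ≥ 0`.
-/

open Finset

section Reduction

variable {V ι : Type*} [AddCommGroup V]

def partialLattice (u : ι → V) (g : ℕ → V) (m : ℕ) : AddSubgroup V :=
  AddSubgroup.closure (Set.range u ∪ g '' Set.Icc 1 m)

variable {u : ι → V} {g : ℕ → V}

theorem partialLattice_mono {m m' : ℕ} (h : m ≤ m') :
    partialLattice u g m ≤ partialLattice u g m' :=
  AddSubgroup.closure_mono <| Set.union_subset_union_right _ <|
    Set.image_mono <| Set.Icc_subset_Icc_right h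

theorem mem_partialLattice_of_range (j : ι) (m : ℕ) : u j ∈ partialLattice u g m :=
  AddSubgroup.subset_closure (Or.inl ⟨j, rfl⟩)

theorem mem_partialLattice {m j : ℕ} (h1 : 1 ≤ j) (h2 : j ≤ m) : g j ∈ partialLattice u g m :=
  AddSubgroup.subset_closure (Or.inr ⟨j, ⟨h1, h2⟩, rfl⟩)

theorem sum_Icc_update_succ_smul {m : ℕ} (β : ℕ → ℤ) (r : ℤ) :
    ∑ j ∈ Icc 1 (m + 1), Function.update β (m + 1) r j • g j =
      ∑ j ∈ Icc 1 m, β j • g j + r • g (m + 1) := by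
  rw [sum_Icc_succ_top (by omega), Function.update_self]
  congr 1
  exact sum_congr rfl fun j hj => by
    rw [Function.update_of_ne (by have := (mem_Icc.1 hj).2; omega)]

variable [Fintype ι]

theorem mem_partialLattice_iff {m : ℕ} {a : V} :
    a ∈ partialLattice u g m ↔
      ∃ (α : ι → ℤ) (β : ℕ → ℤ), a = ∑ j, α j • u j + ∑ j ∈ Icc 1 m, β j • g j := by
  classical
  refine ⟨fun ha => ?_, ?_⟩
  · induction ha using AddSubgroup.closure_induction with
    | mem x hx =>
      rcases hx with ⟨j, rfl⟩ | ⟨j, hj, rfl⟩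
      · exact ⟨Pi.single j 1, 0, by simp [Pi.single_apply, ite_smul]⟩
      · exact ⟨0, Pi.single j 1, by simp [Pi.single_apply, ite_smul, hj.1, hj.2]⟩
    | zero => exact ⟨0, 0, by simp⟩
    | add x y _ _ hx hy =>
      obtain ⟨α, β, rfl⟩ := hx
      obtain ⟨α', β', rfl⟩ := hy
      exact ⟨α + α', β + β', by simp only [Pi.add_apply, add_smul, sum_add_distrib]; abel⟩
    | neg x _ hx =>
      obtain ⟨α, β, rfl⟩ := hx
      exact ⟨-α, -β, by simp only [Pi.neg_apply, neg_smul, sum_neg_distrib]; abel⟩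
  · rintro ⟨α, β, rfl⟩
    exact add_mem (sum_mem fun j _ => zsmul_mem (mem_partialLattice_of_range j m) _)
      (sum_mem fun j hj => zsmul_mem (mem_partialLattice (mem_Icc.1 hj).1 (mem_Icc.1 hj).2) _)

theorem sub_emod_zsmul_mem_partialLattice {m : ℕ} {k : ℤ}
    (hk : k • g (m + 1) ∈ partialLattice u g m) (α : ι → ℤ) (β : ℕ → ℤ) :
    ∑ j, α j • u j + ∑ j ∈ Icc 1 (m + 1), β j • g j - (β (m + 1) % k) • g (m + 1) ∈
      partialLattice u g m := by
  have : ∑ j, α j • u j + ∑ j ∈ Icc 1 (m + 1), β j • g j - (β (m + 1) % k) • g (m + 1) =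
      ∑ j, α j • u j + ∑ j ∈ Icc 1 m, β j • g j + (β (m + 1) / k) • (k • g (m + 1)) := by
    have hsplit : β (m + 1) • g (m + 1) =
        (β (m + 1) / k) • (k • g (m + 1)) + (β (m + 1) % k) • g (m + 1) := by
      rw [smul_smul, ← add_smul, mul_comm, Int.mul_ediv_add_emod]
    rw [sum_Icc_succ_top (by omega), hsplit]
    abel
  rw [this]
  exact add_mem (mem_partialLattice_iff.2 ⟨α, β, rfl⟩) (zsmul_mem hk _)

theorem exists_reduced_repr (K : ℕ → ℕ) {m : ℕ} (hK : ∀ j ∈ Icc 1 m, 0 < K j)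
    (hKg : ∀ j ∈ Icc 1 m, (K j : ℤ) • g j ∈ partialLattice u g (j - 1)) :
    ∀ a ∈ partialLattice u g m, ∃ (α : ι → ℤ) (β : ℕ → ℤ),
      (∀ j ∈ Icc 1 m, 0 ≤ β j ∧ β j ≤ (K j : ℤ) - 1) ∧
      a = ∑ j, α j • u j + ∑ j ∈ Icc 1 m, β j • g j := by
  induction m with
  | zero =>
    intro a ha
    obtain ⟨α, β, rfl⟩ := mem_partialLattice_iff.1 ha
    exact ⟨α, β, by simp, rfl⟩
  | succ m ih =>
    intro a ha
    obtain ⟨α, β, rfl⟩ := mem_partialLattice_iff.1 ha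
    have hm : m + 1 ∈ Icc 1 (m + 1) := by simp
    have hsub : Icc 1 m ⊆ Icc 1 (m + 1) := Icc_subset_Icc_right m.le_succ
    have hk : 0 < (K (m + 1) : ℤ) := Int.natCast_pos.2 (hK _ hm)
    have hKm := hKg _ hm
    rw [Nat.add_sub_cancel] at hKm
    obtain ⟨α', β', hβ', hrepr⟩ := ih (fun j hj => hK j (hsub hj))
      (fun j hj => hKg j (hsub hj)) _ (sub_emod_zsmul_mem_partialLattice hKm α β)
    refine ⟨α', Function.update β' (m + 1) (β (m + 1) % K (m + 1)), fun j hj => ?_, ?_⟩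
    · rcases eq_or_ne j (m + 1) with rfl | hne
      · rw [Function.update_self]
        exact ⟨Int.emod_nonneg _ hk.ne', by have := Int.emod_lt_of_pos (β (m + 1)) hk; omega⟩
      · rw [Function.update_of_ne hne]
        exact hβ' j (mem_Icc.2 ⟨(mem_Icc.1 hj).1, by have := (mem_Icc.1 hj).2; omega⟩)
    · rw [sum_Icc_update_succ_smul, ← add_assoc, ← hrepr, sub_add_cancel]

end Reduction

section Scaled

variable {n : ℕ} {c : ℚ} {g lam : ℕ → Fin n → ℚ}

theorem smul_intCast_mem_partialLattice (v : Fin n → ℤ) (m : ℕ) :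
    c • (fun j => (v j : ℚ)) ∈ partialLattice (fun j : Fin n => Pi.single j c) g m :=
  mem_partialLattice_iff.2 ⟨v, 0, by ext t; simp [Finset.sum_apply, Pi.single_apply, mul_comm]⟩

theorem smul_mem_partialLattice_of_mem_closure {m : ℕ}
    (hlam : ∀ j, 1 ≤ j → j ≤ m → c • lam j ∈ partialLattice (fun j : Fin n => Pi.single j c) g j)
    {x : Fin n → ℚ} (hx : x ∈ AddSubgroup.closure
      ({x : Fin n → ℚ | ∃ v : Fin n → ℤ, x = fun j => (v j : ℚ)} ∪ lam '' Set.Icc 1 m)) :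
    c • x ∈ partialLattice (fun j : Fin n => Pi.single j c) g m := by
  induction hx using AddSubgroup.closure_induction with
  | mem x hx =>
    rcases hx with ⟨v, rfl⟩ | ⟨j, hj, rfl⟩
    · exact smul_intCast_mem_partialLattice v m
    · exact partialLattice_mono hj.2 (hlam j hj.1 hj.2)
  | zero => rw [smul_zero]; exact zero_mem _
  | add x y _ _ hx hy => rw [smul_add]; exact add_mem hx hy
  | neg x _ hx => rw [smul_neg]; exact neg_mem hx

/-- The recursion defining `γⱼ = γⱼ⁽ˢ⁾`, with `c = eₛ` and `kk j = kⱼ`. -/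
structure GammaRecursion (s : ℕ) (kk : ℕ → ℕ) (c : ℚ) (lam g : ℕ → Fin n → ℚ) : Prop where
  one : g 1 = c • lam 1
  succ : ∀ j, 1 ≤ j → j ≤ s - 1 → g (j + 1) = (kk j : ℚ) • g j - c • lam j + c • lam (j + 1)

namespace GammaRecursion

variable {s : ℕ} {kk : ℕ → ℕ}

theorem sub_smul_mem (hg : GammaRecursion s kk c lam g) :
    ∀ j, 1 ≤ j → j ≤ s →
      g j - c • lam j ∈ partialLattice (fun j : Fin n => Pi.single j c) g (j - 1) := by
  intro j hj
  induction j, hj using Nat.le_induction with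
  | base => intro _; rw [hg.one, sub_self]; exact zero_mem _
  | succ j hj ih =>
    intro hjs
    have : g (j + 1) - c • lam (j + 1) = (g j - c • lam j) + ((kk j : ℤ) - 1) • g j := by
      rw [hg.succ j hj (by omega)]
      module
    rw [this]
    exact add_mem (partialLattice_mono (by omega) (ih (by omega)))
      (zsmul_mem (mem_partialLattice hj le_rfl) _)

theorem smul_mem (hg : GammaRecursion s kk c lam g) {j : ℕ} (h1 : 1 ≤ j) (h2 : j ≤ s) :
    c • lam j ∈ partialLattice (fun j : Fin n => Pi.single j c) g j := by
  have := sub_mem (mem_partialLattice h1 le_rfl)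
    (partialLattice_mono (Nat.sub_le j 1) (hg.sub_smul_mem j h1 h2))
  rwa [sub_sub_cancel] at this

theorem natCast_zsmul_mem (hg : GammaRecursion s kk c lam g) {j k : ℕ} (h1 : 1 ≤ j) (h2 : j ≤ s)
    (hk : (k : ℚ) • lam j ∈ AddSubgroup.closure
      ({x : Fin n → ℚ | ∃ v : Fin n → ℤ, x = fun j => (v j : ℚ)} ∪ lam '' Set.Icc 1 (j - 1))) :
    (k : ℤ) • g j ∈ partialLattice (fun j : Fin n => Pi.single j c) g (j - 1) := by
  have : (k : ℤ) • g j = (k : ℤ) • (g j - c • lam j) + c • ((k : ℚ) • lam j) := by module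
  rw [this]
  exact add_mem (zsmul_mem (hg.sub_smul_mem j h1 h2) _)
    (smul_mem_partialLattice_of_mem_closure (fun l hl1 hl2 => hg.smul_mem hl1 (by omega)) hk)

theorem nonneg (hg : GammaRecursion s kk c lam g) (hc : 0 ≤ c) (hlam : 0 ≤ lam 1)
    (hmono : ∀ j, 1 ≤ j → j < s → lam j ≤ lam (j + 1)) :
    ∀ j, 1 ≤ j → j ≤ s → 0 ≤ g j := by
  intro j hj
  induction j, hj using Nat.le_induction with
  | base => intro _; rw [hg.one]; exact smul_nonneg hc hlam
  | succ j hj ih =>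
    intro hjs
    rw [hg.succ j hj (by omega), sub_add_eq_add_sub, add_sub_assoc, ← smul_sub]
    exact add_nonneg (smul_nonneg (Nat.cast_nonneg _) (ih (by omega)))
      (smul_nonneg hc (sub_nonneg.2 (hmono j hj (by omega))))

end GammaRecursion

end Scaled

theorem nonneg_of_sum_smul_le_sum_zsmul_single_add {ι : Type*} [Fintype ι] [DecidableEq ι]
    {c : ℚ} (hc : 0 < c) {S : Finset ℕ} {g : ℕ → ι → ℚ} (hg : ∀ j ∈ S, 0 ≤ g j)
    {K : ℕ → ℚ} {α : ι → ℤ} {β : ℕ → ℤ} (hβ : ∀ j ∈ S, (β j : ℚ) ≤ K j)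
    (h : ∑ j ∈ S, K j • g j ≤ ∑ j, α j • Pi.single j c + ∑ j ∈ S, β j • g j) (t : ι) :
    0 ≤ α t := by
  have hle : ∑ j ∈ S, β j • g j ≤ ∑ j ∈ S, K j • g j := sum_le_sum fun j hj => by
    rw [← Int.cast_smul_eq_zsmul ℚ]
    exact smul_le_smul_of_nonneg_right (hβ j hj) (hg j hj)
  have hα : (0 : ι → ℚ) ≤ ∑ j, α j • Pi.single j c := le_add_iff_nonneg_left _ |>.1 (hle.trans h)
  have hαt : 0 ≤ (α t : ℚ) * c := by
    simpa [Finset.sum_apply, Pi.single_apply] using hα t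
  exact_mod_cast nonneg_of_mul_nonneg_left hαt hc

theorem stmt_3_general
    (n s : ℕ) (hs : 1 ≤ s)
    (lam : ℕ → (Fin n → ℚ))
    (hlam_nonneg : ∀ i, 1 ≤ i → i ≤ s → 0 ≤ lam i)
    (hlam_mono : ∀ i, 1 ≤ i → i < s → lam i < lam (i + 1))
    (M : ℕ → AddSubgroup (Fin n → ℚ))
    (hM : ∀ i, M i = AddSubgroup.closure
      ({x : Fin n → ℚ | ∃ v : Fin n → ℤ, x = fun j => (v j : ℚ)} ∪ (lam '' Set.Icc 1 i)))
    (kk : ℕ → ℕ)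
    (hkk : ∀ i, 1 ≤ i → i ≤ s →
      IsLeast {m : ℕ | 0 < m ∧ (m : ℚ) • lam i ∈ M (i - 1)} (kk i))
    (e : ℕ → ℕ) (he0 : e 0 = 1)
    (he : ∀ i, 1 ≤ i → i ≤ s → e i = kk i * e (i - 1))
    (gam : ℕ → ℕ → (Fin n → ℚ))
    (hgam1 : ∀ i, 1 ≤ i → i ≤ s → gam i 1 = (e i : ℚ) • lam 1)
    (hgam : ∀ i, 1 ≤ i → i ≤ s → ∀ j, 1 ≤ j → j ≤ i - 1 →
      gam i (j + 1) =
        (kk j : ℚ) • gam i j - (e i : ℚ) • lam j + (e i : ℚ) • lam (j + 1)) :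
    ∀ i, 1 ≤ i → i ≤ s →
      ∀ a ∈ AddSubgroup.closure
        ((Set.range fun j : Fin n => Pi.single j (e s : ℚ)) ∪ (gam s '' Set.Icc 1 i)),
      ∃ (α : Fin n → ℤ) (β : ℕ → ℤ),
        (∀ j ∈ Finset.Icc 1 i, 0 ≤ β j ∧ β j ≤ (kk j : ℤ) - 1) ∧
        a = (∑ j : Fin n, α j • Pi.single j (e s : ℚ)) +
            ∑ j ∈ Finset.Icc 1 i, β j • gam s j ∧
        ((∑ j ∈ Finset.Icc 1 i, ((kk j : ℚ) - 1) • gam s j) ≤ a → ∀ j, 0 ≤ α j) := by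
  intro i _ his a ha
  have hγ : GammaRecursion s kk (e s) lam (gam s) := ⟨hgam1 s hs le_rfl, hgam s hs le_rfl⟩
  have hkk_pos : ∀ j, 1 ≤ j → j ≤ s → 0 < kk j := fun j h1 h2 => (hkk j h1 h2).1.1
  have he_pos : ∀ j ≤ s, 0 < e j := by
    intro j
    induction j with
    | zero => intro _; rw [he0]; exact one_pos
    | succ j ih =>
      intro hj
      rw [he _ j.succ_pos hj]
      exact mul_pos (hkk_pos _ j.succ_pos hj) (ih (by omega))
  have hbound : ∀ j ∈ Finset.Icc 1 i, 1 ≤ j ∧ j ≤ s := fun j hj =>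
    ⟨(Finset.mem_Icc.1 hj).1, (Finset.mem_Icc.1 hj).2.trans his⟩
  have hred : ∀ j ∈ Finset.Icc 1 i, (kk j : ℤ) • gam s j ∈
      partialLattice (fun j : Fin n => Pi.single j (e s : ℚ)) (gam s) (j - 1) := fun j hj => by
    obtain ⟨h1, h2⟩ := hbound j hj
    exact hγ.natCast_zsmul_mem h1 h2 (hM (j - 1) ▸ (hkk j h1 h2).1.2)
  obtain ⟨α, β, hβ, rfl⟩ :=
    exists_reduced_repr kk (fun j hj => hkk_pos j (hbound j hj).1 (hbound j hj).2) hred a ha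
  have hγ_nonneg := hγ.nonneg (Nat.cast_nonneg _) (hlam_nonneg 1 le_rfl hs)
    fun j h1 h2 => (hlam_mono j h1 h2).le
  exact ⟨α, β, hβ, rfl, fun hle => nonneg_of_sum_smul_le_sum_zsmul_single_add
    (Nat.cast_pos.2 (he_pos s le_rfl)) (fun j hj => hγ_nonneg j (hbound j hj).1 (hbound j hj).2)
    (fun j hj => by exact_mod_cast (hβ j hj).2) hle⟩

theorem stmt_3
    (n s : ℕ) (hn : 1 ≤ n) (hs : 1 ≤ s)
    (lam : ℕ → (Fin n → ℚ))
    (hlam_nonneg : ∀ i, 1 ≤ i → i ≤ s → 0 ≤ lam i)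
    (hlam_mono : ∀ i, 1 ≤ i → i < s → lam i < lam (i + 1))
    (M : ℕ → AddSubgroup (Fin n → ℚ))
    (hM : ∀ i, M i = AddSubgroup.closure
      ({x : Fin n → ℚ | ∃ v : Fin n → ℤ, x = fun j => (v j : ℚ)} ∪ (lam '' Set.Icc 1 i)))
    (hlamM : ∀ i, 1 ≤ i → i ≤ s → lam i ∉ M (i - 1))
    (kk : ℕ → ℕ)
    (hkk : ∀ i, 1 ≤ i → i ≤ s →
      IsLeast {m : ℕ | 0 < m ∧ (m : ℚ) • lam i ∈ M (i - 1)} (kk i))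
    (e : ℕ → ℕ) (he0 : e 0 = 1)
    (he : ∀ i, 1 ≤ i → i ≤ s → e i = kk i * e (i - 1))
    (gam : ℕ → ℕ → (Fin n → ℚ))
    (hgam1 : ∀ i, 1 ≤ i → i ≤ s → gam i 1 = (e i : ℚ) • lam 1)
    (hgam : ∀ i, 1 ≤ i → i ≤ s → ∀ j, 1 ≤ j → j ≤ i - 1 →
      gam i (j + 1) =
        (kk j : ℚ) • gam i j - (e i : ℚ) • lam j + (e i : ℚ) • lam (j + 1)) :
    ∀ i, 1 ≤ i → i ≤ s →
      ∀ a ∈ AddSubgroup.closure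
        ((Set.range fun j : Fin n => Pi.single j (e s : ℚ)) ∪ (gam s '' Set.Icc 1 i)),
      ∃ (α : Fin n → ℤ) (β : ℕ → ℤ),
        (∀ j ∈ Finset.Icc 1 i, 0 ≤ β j ∧ β j ≤ (kk j : ℤ) - 1) ∧
        a = (∑ j : Fin n, α j • Pi.single j (e s : ℚ)) +
            ∑ j ∈ Finset.Icc 1 i, β j • gam s j ∧
        ((∑ j ∈ Finset.Icc 1 i, ((kk j : ℚ) - 1) • gam s j) ≤ a → ∀ j, 0 ≤ α j) :=
  stmt_3_general n s hs lam hlam_nonneg hlam_mono M hM kk hkk e he0 he gam hgam1 hgam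
end

section
/- Let Γ̃ be the subgroup of ℤ^n generated by Γ(λ_1, …, λ_s). Then the vector c = Σ_{j=1}^{s}(k_j − 1)·γ_j lies in ℕ_0^n and has the property that every a ∈ Γ̃ with c ≤ a (componentwise) belongs to Γ(λ_1, …, λ_s). -/
lemma aux_kfun {n : ℕ} (c : ℚ) (v : Fin n → ℤ) :
    (fun i => c * (v i : ℚ)) = ∑ i : Fin n, (v i : ℚ) • (Pi.single i c : Fin n → ℚ) := by
  funext j
  rw [Finset.sum_apply]
  simp [Pi.single_apply, Finset.sum_ite_eq, mul_comm]

theorem stmt_4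
    (n s : ℕ) (hn : 1 ≤ n) (hs : 1 ≤ s)
    (lam : ℕ → (Fin n → ℚ))
    (hlam_nonneg : ∀ i, 1 ≤ i → i ≤ s → 0 ≤ lam i)
    (hlam_mono : ∀ i, 1 ≤ i → i < s → lam i < lam (i + 1))
    (M : ℕ → AddSubgroup (Fin n → ℚ))
    (hM : ∀ i, M i = AddSubgroup.closure
      ({x : Fin n → ℚ | ∃ v : Fin n → ℤ, x = fun j => (v j : ℚ)} ∪ (lam '' Set.Icc 1 i)))
    (hlamM : ∀ i, 1 ≤ i → i ≤ s → lam i ∉ M (i - 1))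
    (kk : ℕ → ℕ)
    (hkk : ∀ i, 1 ≤ i → i ≤ s →
      IsLeast {m : ℕ | 0 < m ∧ (m : ℚ) • lam i ∈ M (i - 1)} (kk i))
    (e : ℕ → ℕ) (he0 : e 0 = 1)
    (he : ∀ i, 1 ≤ i → i ≤ s → e i = kk i * e (i - 1))
    (gam : ℕ → ℕ → (Fin n → ℚ))
    (hgam1 : ∀ i, 1 ≤ i → i ≤ s → gam i 1 = (e i : ℚ) • lam 1)
    (hgam : ∀ i, 1 ≤ i → i ≤ s → ∀ j, 1 ≤ j → j ≤ i - 1 →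
      gam i (j + 1) =
        (kk j : ℚ) • gam i j - (e i : ℚ) • lam j + (e i : ℚ) • lam (j + 1)) :
    (∃ v : Fin n → ℕ,
      (∑ j ∈ Finset.Icc 1 s, ((kk j : ℚ) - 1) • gam s j) = fun j => (v j : ℚ)) ∧
    ∀ a ∈ AddSubgroup.closure
        ((AddSubmonoid.closure
          ((Set.range fun j : Fin n => Pi.single j (e s : ℚ)) ∪ (gam s '' Set.Icc 1 s)) :
            AddSubmonoid (Fin n → ℚ)) : Set (Fin n → ℚ)),
      (∑ j ∈ Finset.Icc 1 s, ((kk j : ℚ) - 1) • gam s j) ≤ a →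
      a ∈ AddSubmonoid.closure
        ((Set.range fun j : Fin n => Pi.single j (e s : ℚ)) ∪ (gam s '' Set.Icc 1 s)) := by
  -- basic positivity
  have hkkpos : ∀ i, 1 ≤ i → i ≤ s → 0 < kk i := fun i h1 h2 => (hkk i h1 h2).1.1
  have epos : ∀ j, j ≤ s → 0 < e j := by
    intro j
    induction j with
    | zero => intro _; simp [he0]
    | succ j ih =>
      intro hj
      rw [he (j + 1) (by omega) hj]
      simp only [Nat.add_sub_cancel]
      exact Nat.mul_pos (hkkpos (j + 1) (by omega) hj) (ih (by omega))
  have espos : (0 : ℚ) < (e s : ℚ) := by exact_mod_cast epos s le_rfl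
  -- the generating sets and subgroups
  set Sg : ℕ → Set (Fin n → ℚ) := fun j =>
    (Set.range fun i : Fin n => Pi.single i (e s : ℚ)) ∪ (gam s '' Set.Icc 1 j) with hSg
  set L : ℕ → AddSubgroup (Fin n → ℚ) := fun j => AddSubgroup.closure (Sg j) with hL
  -- smul helpers
  have nsmul_cast : ∀ (m : ℕ) (x : Fin n → ℚ) (H : AddSubgroup (Fin n → ℚ)),
      x ∈ H → (m : ℚ) • x ∈ H := by
    intro m x H hx
    rw [Nat.cast_smul_eq_nsmul ℚ]
    exact AddSubgroup.nsmul_mem _ hx _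
  have zsmul_cast : ∀ (m : ℤ) (x : Fin n → ℚ) (H : AddSubgroup (Fin n → ℚ)),
      x ∈ H → (m : ℚ) • x ∈ H := by
    intro m x H hx
    rw [Int.cast_smul_eq_zsmul ℚ]
    exact AddSubgroup.zsmul_mem _ hx _
  -- scaled integer vectors lie in each L j
  have hkmem : ∀ (v : Fin n → ℤ) (j : ℕ), (fun i => (e s : ℚ) * (v i : ℚ)) ∈ L j := by
    intro v j
    rw [aux_kfun]
    refine AddSubgroup.sum_mem _ fun i _ => ?_
    have hgen : (Pi.single i (e s : ℚ) : Fin n → ℚ) ∈ Sg j := Or.inl ⟨i, rfl⟩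
    exact zsmul_cast _ _ _ (AddSubgroup.subset_closure hgen)
  -- e j clears denominators in M j
  have intM : ∀ j, j ≤ s → ∀ x ∈ M j, ∃ w : Fin n → ℤ, (e j : ℚ) • x = fun i => (w i : ℚ) := by
    intro j
    induction j with
    | zero =>
      intro _ x hx
      rw [hM 0] at hx
      have hx' : ∃ w : Fin n → ℤ, x = fun i => (w i : ℚ) := by
        refine AddSubgroup.closure_induction ?_ ?_ ?_ ?_ hx
        · rintro y (hy | ⟨r, hr, rfl⟩)
          · exact hy
          · rcases Set.mem_Icc.mp hr with ⟨h1, h2⟩; omega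
        · exact ⟨0, by funext i; simp⟩
        · rintro y z - - ⟨wy, rfl⟩ ⟨wz, rfl⟩
          exact ⟨wy + wz, by funext i; push_cast; simp⟩
        · rintro y - ⟨wy, rfl⟩
          exact ⟨-wy, by funext i; push_cast; simp⟩
      obtain ⟨w, rfl⟩ := hx'
      exact ⟨w, by rw [he0]; funext i; simp⟩
    | succ j ih =>
      intro hj x hx
      have hj' : j ≤ s := by omega
      have heq : e (j + 1) = kk (j + 1) * e j := by
        have := he (j + 1) (by omega) hj; simpa using this
      rw [hM (j + 1)] at hx
      refine AddSubgroup.closure_induction ?_ ?_ ?_ ?_ hx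
      · rintro y (⟨w, rfl⟩ | ⟨r, hr, rfl⟩)
        · refine ⟨fun i => (e (j + 1) : ℤ) * w i, ?_⟩
          funext i
          push_cast
          simp [smul_eq_mul]
        · rcases Set.mem_Icc.mp hr with ⟨h1r, h2r⟩
          by_cases hrj : r = j + 1
          · subst hrj
            have hmem : (kk (j + 1) : ℚ) • lam (j + 1) ∈ M j := by
              have := (hkk (j + 1) (by omega) hj).1.2; simpa using this
            obtain ⟨w, hw⟩ := ih hj' _ hmem
            refine ⟨w, ?_⟩
            rw [heq]
            push_cast
            rw [mul_comm, mul_smul]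
            exact hw
          · have hrj' : r ≤ j := by omega
            have hmem : lam r ∈ M j := by
              rw [hM j]
              exact AddSubgroup.subset_closure (Or.inr ⟨r, Set.mem_Icc.mpr ⟨h1r, hrj'⟩, rfl⟩)
            obtain ⟨w, hw⟩ := ih hj' _ hmem
            refine ⟨fun i => (kk (j + 1) : ℤ) * w i, ?_⟩
            rw [heq]
            push_cast
            rw [mul_smul, hw]
            funext i
            push_cast
            simp [smul_eq_mul]
      · exact ⟨0, by funext i; simp⟩
      · rintro y z - - ⟨wy, hy⟩ ⟨wz, hz⟩
        refine ⟨wy + wz, ?_⟩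
        rw [smul_add, hy, hz]
        funext i
        push_cast
        simp
      · rintro y - ⟨wy, hy⟩
        refine ⟨-wy, ?_⟩
        rw [smul_neg, hy]
        funext i
        push_cast
        simp
  have elam_int : ∀ r, 1 ≤ r → r ≤ s →
      ∃ w : Fin n → ℤ, (e s : ℚ) • lam r = fun i => (w i : ℚ) := by
    intro r h1 h2
    refine intM s le_rfl (lam r) ?_
    rw [hM s]
    exact AddSubgroup.subset_closure (Or.inr ⟨r, Set.mem_Icc.mpr ⟨h1, h2⟩, rfl⟩)
  -- gam s r is a nonnegative integer vector
  have gprop : ∀ r, 1 ≤ r → r ≤ s →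
      (0 ≤ gam s r ∧ ∃ w : Fin n → ℤ, gam s r = fun i => (w i : ℚ)) := by
    intro r h1
    induction r, h1 using Nat.le_induction with
    | base =>
      intro h2
      constructor
      · rw [hgam1 s hs le_rfl]
        exact smul_nonneg (le_of_lt espos) (hlam_nonneg 1 le_rfl hs)
      · obtain ⟨w, hw⟩ := elam_int 1 le_rfl hs
        exact ⟨w, by rw [hgam1 s hs le_rfl]; exact hw⟩
    | succ r hr ih =>
      intro h2
      have hrec := hgam s hs le_rfl r hr (by omega)
      obtain ⟨hpos, w, hw⟩ := ih (by omega)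
      obtain ⟨wr, hwr⟩ := elam_int r hr (by omega)
      obtain ⟨wr1, hwr1⟩ := elam_int (r + 1) (by omega) h2
      have hmono : lam r ≤ lam (r + 1) := le_of_lt (hlam_mono r hr (by omega))
      constructor
      · rw [hrec]
        have ha : (0 : Fin n → ℚ) ≤ (kk r : ℚ) • gam s r :=
          smul_nonneg (by positivity) hpos
        have hb : (e s : ℚ) • lam r ≤ (e s : ℚ) • lam (r + 1) :=
          smul_le_smul_of_nonneg_left hmono (le_of_lt espos)
        intro i
        have h1' := ha i
        have h2' := hb i
        simp only [Pi.add_apply, Pi.sub_apply, Pi.zero_apply] at h1' h2' ⊢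
        linarith
      · refine ⟨fun i => (kk r : ℤ) * w i - wr i + wr1 i, ?_⟩
        rw [hrec]
        funext i
        have hwi := congrFun hw i
        have hwri := congrFun hwr i
        have hwr1i := congrFun hwr1 i
        have hwi' : gam s r i = (w i : ℚ) := by rw [hw]
        have hwri' : (e s : ℚ) * lam r i = (wr i : ℚ) := by
          simpa [smul_eq_mul] using hwri
        have hwr1i' : (e s : ℚ) * lam (r + 1) i = (wr1 i : ℚ) := by
          simpa [smul_eq_mul] using hwr1i
        simp only [Pi.add_apply, Pi.sub_apply, Pi.smul_apply, smul_eq_mul]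
        push_cast
        linear_combination (kk r : ℚ) * hwi' - hwri' + hwr1i'
  -- e s • lam r ∈ L j for r ≤ j
  have elam_in_L : ∀ j, j ≤ s → ∀ r, 1 ≤ r → r ≤ j → (e s : ℚ) • lam r ∈ L j := by
    intro j hj r h1
    induction r, h1 using Nat.le_induction with
    | base =>
      intro hrj
      rw [← hgam1 s hs le_rfl]
      exact AddSubgroup.subset_closure (Or.inr ⟨1, Set.mem_Icc.mpr ⟨le_rfl, hrj⟩, rfl⟩)
    | succ r hr ih =>
      intro hrj
      have hrec := hgam s hs le_rfl r hr (by omega)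
      have hsolve : (e s : ℚ) • lam (r + 1)
          = gam s (r + 1) - (kk r : ℚ) • gam s r + (e s : ℚ) • lam r := by
        rw [hrec]; abel
      rw [hsolve]
      have m1 : gam s (r + 1) ∈ L j :=
        AddSubgroup.subset_closure (Or.inr ⟨r + 1, Set.mem_Icc.mpr ⟨by omega, hrj⟩, rfl⟩)
      have m2 : (kk r : ℚ) • gam s r ∈ L j :=
        nsmul_cast _ _ _
          (AddSubgroup.subset_closure (Or.inr ⟨r, Set.mem_Icc.mpr ⟨hr, by omega⟩, rfl⟩))
      exact AddSubgroup.add_mem _ (AddSubgroup.sub_mem _ m1 m2) (ih (by omega))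
  have eM_in_L : ∀ j, j ≤ s → ∀ x ∈ M j, (e s : ℚ) • x ∈ L j := by
    intro j hj x hx
    rw [hM j] at hx
    refine AddSubgroup.closure_induction ?_ ?_ ?_ ?_ hx
    · rintro y (⟨w, rfl⟩ | ⟨r, hr, rfl⟩)
      · have heq : (e s : ℚ) • (fun i => (w i : ℚ)) = fun i => (e s : ℚ) * (w i : ℚ) := by
          funext i; simp [smul_eq_mul]
        rw [heq]; exact hkmem w j
      · exact elam_in_L j hj r (Set.mem_Icc.mp hr).1 (Set.mem_Icc.mp hr).2
    · rw [smul_zero]; exact zero_mem _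
    · intro y z _ _ my mz; rw [smul_add]; exact add_mem my mz
    · intro y _ my; rw [smul_neg]; exact neg_mem my
  -- the key relation : kk t • gam s t ∈ L (t-1)
  have kgam : ∀ t, 1 ≤ t → t ≤ s → (kk t : ℚ) • gam s t ∈ L (t - 1) := by
    intro t h1 h2
    have hdiff : gam s t - (e s : ℚ) • lam t ∈ L (t - 1) := by
      rcases Nat.eq_or_lt_of_le h1 with h | h
      · rw [← h, hgam1 s hs le_rfl, sub_self]
        exact zero_mem _
      · have ht1 : 1 ≤ t - 1 := by omega
        have hrec := hgam s hs le_rfl (t - 1) ht1 (by omega)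
        have hts : t - 1 + 1 = t := by omega
        rw [hts] at hrec
        have hsolve : gam s t - (e s : ℚ) • lam t
            = (kk (t - 1) : ℚ) • gam s (t - 1) - (e s : ℚ) • lam (t - 1) := by
          rw [hrec]; abel
        rw [hsolve]
        have m2 : (kk (t - 1) : ℚ) • gam s (t - 1) ∈ L (t - 1) :=
          nsmul_cast _ _ _
            (AddSubgroup.subset_closure (Or.inr ⟨t - 1, Set.mem_Icc.mpr ⟨ht1, le_rfl⟩, rfl⟩))
        exact AddSubgroup.sub_mem _ m2 (elam_in_L (t - 1) (by omega) (t - 1) ht1 le_rfl)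
    have e1 : (kk t : ℚ) • gam s t
        = (kk t : ℚ) • (gam s t - (e s : ℚ) • lam t) + (e s : ℚ) • ((kk t : ℚ) • lam t) := by
      rw [smul_sub, smul_comm ((kk t : ℚ)) ((e s : ℚ))]; abel
    rw [e1]
    exact AddSubgroup.add_mem _ (nsmul_cast _ _ _ hdiff)
      (eM_in_L (t - 1) (by omega) _ (hkk t h1 h2).1.2)
  -- every element of L j has an integer representation
  have hrepL : ∀ j, j ≤ s → ∀ a ∈ L j, ∃ (c : ℕ → ℤ) (v : Fin n → ℤ),
      a = (∑ r ∈ Finset.Icc 1 j, ((c r : ℚ)) • gam s r) + fun i => (e s : ℚ) * (v i : ℚ) := by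
    intro j hj a ha
    refine AddSubgroup.closure_induction ?_ ?_ ?_ ?_ ha
    · rintro y (⟨i, rfl⟩ | ⟨r, hr, rfl⟩)
      · refine ⟨0, fun i' => if i' = i then 1 else 0, ?_⟩
        funext i'
        simp [Pi.single_apply, mul_ite]
      · rcases Set.mem_Icc.mp hr with ⟨hr1, hr2⟩
        refine ⟨fun r' => if r' = r then 1 else 0, 0, ?_⟩
        have hsum : (∑ r' ∈ Finset.Icc 1 j,
              ((((if r' = r then 1 else 0 : ℤ)) : ℚ)) • gam s r') = gam s r := by
          rw [Finset.sum_eq_single r]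
          · simp
          · intro b _ hb; simp [hb]
          · intro hnot; exact absurd (Finset.mem_Icc.mpr ⟨hr1, hr2⟩) hnot
        beta_reduce
        rw [hsum]
        funext i; simp
    · exact ⟨0, 0, by funext i; simp⟩
    · rintro y z - - ⟨cy, vy, rfl⟩ ⟨cz, vz, rfl⟩
      refine ⟨cy + cz, vy + vz, ?_⟩
      have hsum : (∑ r ∈ Finset.Icc 1 j, (((cy + cz) r : ℚ)) • gam s r)
          = (∑ r ∈ Finset.Icc 1 j, ((cy r : ℚ)) • gam s r)
            + ∑ r ∈ Finset.Icc 1 j, ((cz r : ℚ)) • gam s r := by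
        rw [← Finset.sum_add_distrib]
        refine Finset.sum_congr rfl fun r _ => ?_
        have : (((cy + cz) r : ℤ) : ℚ) = (cy r : ℚ) + (cz r : ℚ) := by simp
        rw [this, add_smul]
      rw [hsum]
      funext i
      simp only [Pi.add_apply]
      push_cast
      ring
    · rintro y - ⟨cy, vy, rfl⟩
      refine ⟨-cy, -vy, ?_⟩
      have hsum : (∑ r ∈ Finset.Icc 1 j, (((-cy) r : ℚ)) • gam s r)
          = -(∑ r ∈ Finset.Icc 1 j, ((cy r : ℚ)) • gam s r) := by
        rw [← Finset.sum_neg_distrib]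
        refine Finset.sum_congr rfl fun r _ => ?_
        have : (((-cy) r : ℤ) : ℚ) = -(cy r : ℚ) := by simp
        rw [this, neg_smul]
      rw [hsum]
      funext i
      simp only [Pi.neg_apply, Pi.add_apply]
      push_cast
      ring
  -- coefficient reduction
  have redN : ∀ d, ∀ a ∈ L s, ∃ (c : ℕ → ℤ) (v : Fin n → ℤ),
      (a = (∑ r ∈ Finset.Icc 1 s, ((c r : ℚ)) • gam s r) + fun i => (e s : ℚ) * (v i : ℚ)) ∧
      ∀ r, s - d < r → r ≤ s → 0 ≤ c r ∧ c r < kk r := by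
    intro d
    induction d with
    | zero =>
      intro a ha
      obtain ⟨c, v, hcv⟩ := hrepL s le_rfl a ha
      exact ⟨c, v, hcv, fun r hr1 hr2 => absurd hr1 (by omega)⟩
    | succ d ih =>
      intro a ha
      by_cases hds : s ≤ d
      · obtain ⟨c, v, hcv, hgood⟩ := ih a ha
        exact ⟨c, v, hcv, fun r hr1 hr2 => hgood r (by omega) hr2⟩
      · push_neg at hds
        set t := s - d with ht
        have ht1 : 1 ≤ t := by omega
        have hts : t ≤ s := by omega
        obtain ⟨c, v, hcv, hgood⟩ := ih a ha
        set q := c t / (kk t : ℤ) with hq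
        set ρ := c t % (kk t : ℤ) with hρ
        have hkt : (0 : ℤ) < (kk t : ℤ) := by exact_mod_cast hkkpos t ht1 hts
        have hρ0 : 0 ≤ ρ := Int.emod_nonneg _ (by omega)
        have hρk : ρ < (kk t : ℤ) := Int.emod_lt_of_pos _ hkt
        have hct : (kk t : ℤ) * q + ρ = c t := Int.mul_ediv_add_emod _ _
        have hmem : ((q : ℚ)) • ((kk t : ℚ) • gam s t) ∈ L (t - 1) :=
          zsmul_cast _ _ _ (kgam t ht1 hts)
        obtain ⟨c₂, v₂, h2⟩ := hrepL (t - 1) (by omega) _ hmem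
        refine ⟨fun r => if r < t then c r + c₂ r else if r = t then ρ else c r, v + v₂, ?_, ?_⟩
        · have hcoef : ∀ r, (((if r < t then c r + c₂ r else if r = t then ρ else c r : ℤ)) : ℚ)
              = (c r : ℚ) + (if r < t then (c₂ r : ℚ) else 0)
                + (if r = t then (((ρ - c t : ℤ)) : ℚ) else 0) := by
            intro r
            rcases lt_trichotomy r t with h | h | h
            · rw [if_pos h, if_pos h, if_neg (by omega : ¬ r = t)]
              push_cast; ring
            · rw [if_neg (by omega : ¬ r < t), if_pos h, if_pos h, if_neg (by omega : ¬ r < t)]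
              subst h
              push_cast; ring
            · rw [if_neg (by omega : ¬ r < t), if_neg (by omega : ¬ r = t),
                if_neg (by omega : ¬ r < t), if_neg (by omega : ¬ r = t)]
              ring
          have hsplit : (∑ r ∈ Finset.Icc 1 s,
                (((if r < t then c r + c₂ r else if r = t then ρ else c r : ℤ)) : ℚ) • gam s r)
              = (∑ r ∈ Finset.Icc 1 s, (c r : ℚ) • gam s r)
                + (∑ r ∈ Finset.Icc 1 s, (if r < t then (c₂ r : ℚ) else 0) • gam s r)
                + (∑ r ∈ Finset.Icc 1 s,
                    (if r = t then (((ρ - c t : ℤ)) : ℚ) else 0) • gam s r) := by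
            rw [← Finset.sum_add_distrib, ← Finset.sum_add_distrib]
            refine Finset.sum_congr rfl fun r _ => ?_
            rw [hcoef r, add_smul, add_smul]
          have hsum2 : (∑ r ∈ Finset.Icc 1 s, (if r < t then (c₂ r : ℚ) else 0) • gam s r)
              = ∑ r ∈ Finset.Icc 1 (t - 1), (c₂ r : ℚ) • gam s r := by
            rw [← Finset.sum_subset (Finset.Icc_subset_Icc_right (by omega : t - 1 ≤ s))]
            · refine Finset.sum_congr rfl fun r hr => ?_
              have hmem' := Finset.mem_Icc.mp hr
              rw [if_pos (by omega)]
            · intro x hx hx'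
              have h1 := Finset.mem_Icc.mp hx
              have hnlt : ¬ x < t := by
                intro hlt; exact hx' (Finset.mem_Icc.mpr ⟨h1.1, by omega⟩)
              rw [if_neg hnlt, zero_smul]
          have hsum3 : (∑ r ∈ Finset.Icc 1 s,
                (if r = t then (((ρ - c t : ℤ)) : ℚ) else 0) • gam s r)
              = (((ρ - c t : ℤ)) : ℚ) • gam s t := by
            rw [Finset.sum_eq_single t]
            · rw [if_pos rfl]
            · intro b _ hb; rw [if_neg hb, zero_smul]
            · intro h; exact absurd (Finset.mem_Icc.mpr ⟨ht1, hts⟩) h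
          have hqk : ((q : ℚ)) • ((kk t : ℚ) • gam s t)
              = ((((kk t : ℤ) * q : ℤ)) : ℚ) • gam s t := by
            rw [smul_smul]; push_cast; ring_nf
          have hc2 : (∑ r ∈ Finset.Icc 1 (t - 1), (c₂ r : ℚ) • gam s r)
              = ((((kk t : ℤ) * q : ℤ)) : ℚ) • gam s t
                - fun i => (e s : ℚ) * (v₂ i : ℚ) := by
            rw [← hqk, eq_sub_iff_add_eq]
            exact h2.symm
          have hB : (((ρ - c t : ℤ)) : ℚ) • gam s t
              = -(((((kk t : ℤ) * q : ℤ)) : ℚ) • gam s t) := by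
            rw [← neg_smul]
            congr 1
            have : (ρ - c t : ℤ) = -((kk t : ℤ) * q) := by linarith
            rw [this]; push_cast; ring
          have hkv : (fun i => (e s : ℚ) * ((v + v₂) i : ℚ))
              = (fun i => (e s : ℚ) * (v i : ℚ)) + fun i => (e s : ℚ) * (v₂ i : ℚ) := by
            funext i; simp [Pi.add_apply]; push_cast; ring
          beta_reduce
          rw [hsplit, hsum2, hsum3, hc2, hB, hkv, hcv]
          abel
        · intro r hr1 hr2
          beta_reduce
          have hrt : t ≤ r := by omega
          by_cases hrt' : r = t
          · rw [if_neg (by omega : ¬ r < t), if_pos hrt', hrt']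
            exact ⟨hρ0, hρk⟩
          · rw [if_neg (by omega : ¬ r < t), if_neg hrt']
            exact hgood r (by omega) hr2
  -- natural-number version of the gammas
  have gnat : ∀ r, 1 ≤ r → r ≤ s → ∃ g : Fin n → ℕ, gam s r = fun i => (g i : ℚ) := by
    intro r h1 h2
    obtain ⟨hpos, w, hw⟩ := gprop r h1 h2
    refine ⟨fun i => (w i).toNat, ?_⟩
    funext i
    have hwi : gam s r i = (w i : ℚ) := by rw [hw]
    have hw0 : (0 : ℚ) ≤ (w i : ℚ) := by rw [← hwi]; exact hpos i
    have hwi0 : 0 ≤ w i := by exact_mod_cast hw0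
    rw [hwi]
    exact_mod_cast (congrArg (Int.cast : ℤ → ℚ) (Int.toNat_of_nonneg hwi0)).symm
  choose! g hg using gnat
  constructor
  · -- the conductor is a natural vector
    refine ⟨fun i => ∑ r ∈ Finset.Icc 1 s, (kk r - 1) * g r i, ?_⟩
    funext i
    rw [Finset.sum_apply]
    have hterm : ∀ r ∈ Finset.Icc 1 s,
        (((kk r : ℚ) - 1) • gam s r) i = (((kk r - 1) * g r i : ℕ) : ℚ) := by
      intro r hr
      obtain ⟨h1, h2⟩ := Finset.mem_Icc.mp hr
      have hgr : gam s r i = (g r i : ℚ) := by rw [hg r h1 h2]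
      have hk1 : 1 ≤ kk r := hkkpos r h1 h2
      rw [Pi.smul_apply, smul_eq_mul, hgr, Nat.cast_mul, Nat.cast_sub hk1, Nat.cast_one]
    rw [Finset.sum_congr rfl hterm, Nat.cast_sum]
  · -- the conductor property
    intro a ha hle
    have haL : a ∈ L s := by
      have hsub : AddSubgroup.closure
          ((AddSubmonoid.closure (Sg s) : AddSubmonoid (Fin n → ℚ)) : Set (Fin n → ℚ))
            ≤ L s := by
        rw [AddSubgroup.closure_le]
        intro x hx
        exact (AddSubmonoid.closure_le.mpr
          (fun y hy => AddSubgroup.subset_closure hy : Sg s ⊆ ((L s).toAddSubmonoid : Set (Fin n → ℚ)))) hx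
      exact hsub ha
    obtain ⟨c, v, hcv, hgood'⟩ := redN s a haL
    have hgood : ∀ r, 1 ≤ r → r ≤ s → 0 ≤ c r ∧ c r < kk r :=
      fun r h1 h2 => hgood' r (by omega) h2
    have hvpos : ∀ i, 0 ≤ v i := by
      intro i
      have hai := hle i
      have hrep := congrFun hcv i
      simp only [Pi.add_apply, Finset.sum_apply, Pi.smul_apply, smul_eq_mul] at hrep hai
      have hsum_le : (∑ r ∈ Finset.Icc 1 s, (c r : ℚ) * gam s r i)
          ≤ ∑ r ∈ Finset.Icc 1 s, ((kk r : ℚ) - 1) * gam s r i := by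
        refine Finset.sum_le_sum fun r hr => ?_
        obtain ⟨h1, h2⟩ := Finset.mem_Icc.mp hr
        obtain ⟨hc0, hck⟩ := hgood r h1 h2
        have hγ := (gprop r h1 h2).1 i
        have hcle : (c r : ℚ) ≤ (kk r : ℚ) - 1 := by
          have h' : c r ≤ (kk r : ℤ) - 1 := by omega
          exact_mod_cast h'
        exact mul_le_mul_of_nonneg_right hcle hγ
      have hev : 0 ≤ (e s : ℚ) * (v i : ℚ) := by linarith
      have hv0 : (0 : ℚ) ≤ (v i : ℚ) := by nlinarith [hev, espos]
      exact_mod_cast hv0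
    rw [hcv]
    refine AddSubmonoid.add_mem _ ?_ ?_
    · refine AddSubmonoid.sum_mem _ fun r hr => ?_
      obtain ⟨h1, h2⟩ := Finset.mem_Icc.mp hr
      have hc0 := (hgood r h1 h2).1
      have hcast : ((c r : ℚ)) = (((c r).toNat : ℕ) : ℚ) := by
        exact_mod_cast (congrArg (Int.cast : ℤ → ℚ) (Int.toNat_of_nonneg hc0)).symm
      have hns : ((c r : ℚ)) • gam s r = ((c r).toNat) • gam s r := by
        rw [← Nat.cast_smul_eq_nsmul ℚ, ← hcast]
      rw [hns]
      have hgen : gam s r ∈ Sg s := Or.inr ⟨r, Set.mem_Icc.mpr ⟨h1, h2⟩, rfl⟩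
      exact AddSubmonoid.nsmul_mem _ (AddSubmonoid.subset_closure hgen) _
    · rw [aux_kfun]
      refine AddSubmonoid.sum_mem _ fun i _ => ?_
      have hcast : ((v i : ℚ)) = (((v i).toNat : ℕ) : ℚ) := by
        exact_mod_cast (congrArg (Int.cast : ℤ → ℚ) (Int.toNat_of_nonneg (hvpos i))).symm
      have hns : ((v i : ℚ)) • (Pi.single i (e s : ℚ) : Fin n → ℚ)
          = ((v i).toNat) • (Pi.single i (e s : ℚ) : Fin n → ℚ) := by
        rw [← Nat.cast_smul_eq_nsmul ℚ, ← hcast]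
      rw [hns]
      have hgen : (Pi.single i (e s : ℚ) : Fin n → ℚ) ∈ Sg s := Or.inl ⟨i, rfl⟩
      exact AddSubmonoid.nsmul_mem _ (AddSubmonoid.subset_closure hgen) _
end

section
/- For every i = 1, …, s, the identity Σ_{ℓ=1}^{i}(k_ℓ − 1)·γ_ℓ = k_i·γ_i − k·λ_i holds in ℚ^n, and consequently k_i·γ_i > Σ_{ℓ=1}^{i}(k_ℓ − 1)·γ_ℓ in the componentwise partial order (i.e., k_i·γ_i ≥ Σ_{ℓ=1}^{i}(k_ℓ − 1)·γ_ℓ componentwise and the two vectors are not equal). -/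
theorem stmt_5
    (n s : ℕ) (hn : 1 ≤ n) (hs : 1 ≤ s)
    (lam : ℕ → (Fin n → ℚ))
    (hlam_nonneg : ∀ i, 1 ≤ i → i ≤ s → 0 ≤ lam i)
    (hlam_mono : ∀ i, 1 ≤ i → i < s → lam i < lam (i + 1))
    (M : ℕ → AddSubgroup (Fin n → ℚ))
    (hM : ∀ i, M i = AddSubgroup.closure
      ({x : Fin n → ℚ | ∃ v : Fin n → ℤ, x = fun j => (v j : ℚ)} ∪ (lam '' Set.Icc 1 i)))
    (hlamM : ∀ i, 1 ≤ i → i ≤ s → lam i ∉ M (i - 1))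
    (kk : ℕ → ℕ)
    (hkk : ∀ i, 1 ≤ i → i ≤ s →
      IsLeast {m : ℕ | 0 < m ∧ (m : ℚ) • lam i ∈ M (i - 1)} (kk i))
    (e : ℕ → ℕ) (he0 : e 0 = 1)
    (he : ∀ i, 1 ≤ i → i ≤ s → e i = kk i * e (i - 1))
    (gam : ℕ → ℕ → (Fin n → ℚ))
    (hgam1 : ∀ i, 1 ≤ i → i ≤ s → gam i 1 = (e i : ℚ) • lam 1)
    (hgam : ∀ i, 1 ≤ i → i ≤ s → ∀ j, 1 ≤ j → j ≤ i - 1 →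
      gam i (j + 1) =
        (kk j : ℚ) • gam i j - (e i : ℚ) • lam j + (e i : ℚ) • lam (j + 1)) :
    ∀ i, 1 ≤ i → i ≤ s →
      (∑ ℓ ∈ Finset.Icc 1 i, ((kk ℓ : ℚ) - 1) • gam s ℓ =
        (kk i : ℚ) • gam s i - (e s : ℚ) • lam i) ∧
      (∑ ℓ ∈ Finset.Icc 1 i, ((kk ℓ : ℚ) - 1) • gam s ℓ < (kk i : ℚ) • gam s i) := by
  have hkpos : ∀ i, 1 ≤ i → i ≤ s → 0 < kk i := fun i h1 h2 => ((hkk i h1 h2).1).1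
  have hepos : ∀ i, i ≤ s → 0 < e i := by
    intro i
    induction i with
    | zero => intro _; simp [he0]
    | succ m ih =>
      intro h
      rw [he (m+1) (by omega) h]
      simp only [Nat.add_sub_cancel]
      exact Nat.mul_pos (hkpos (m+1) (by omega) h) (ih (by omega))
  have hlam_pos : ∀ i, 1 ≤ i → i ≤ s → 0 < lam i := by
    intro i h1 h2
    refine lt_of_le_of_ne (hlam_nonneg i h1 h2) ?_
    intro h
    exact hlamM i h1 h2 (h ▸ (M (i-1)).zero_mem)
  have key : ∀ i, 1 ≤ i → i ≤ s →
      (∑ ℓ ∈ Finset.Icc 1 i, ((kk ℓ : ℚ) - 1) • gam s ℓ =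
        (kk i : ℚ) • gam s i - (e s : ℚ) • lam i) := by
    intro i hi
    induction i, hi using Nat.le_induction with
    | base =>
      intro _
      rw [Finset.Icc_self, Finset.sum_singleton, hgam1 s hs le_rfl, sub_smul, one_smul]
    | succ m hm ih =>
      intro hms
      have hms' : m ≤ s := by omega
      have hrec : gam s (m + 1) =
          (kk m : ℚ) • gam s m - (e s : ℚ) • lam m + (e s : ℚ) • lam (m + 1) :=
        hgam s hs le_rfl m hm (by omega)
      rw [Finset.sum_Icc_succ_top (by omega : 1 ≤ m + 1), ih hms', hrec]
      module
  intro i h1 h2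
  refine ⟨key i h1 h2, ?_⟩
  rw [key i h1 h2]
  have hne : (e s : ℚ) • lam i ≠ 0 :=
    smul_ne_zero (by exact_mod_cast (hepos s le_rfl).ne') (ne_of_gt (hlam_pos i h1 h2))
  have hnn : (0 : Fin n → ℚ) ≤ (e s : ℚ) • lam i :=
    smul_nonneg (by positivity) (hlam_nonneg i h1 h2)
  exact sub_lt_self _ (lt_of_le_of_ne hnn (Ne.symm hne))
end

section
/- For every i = 1, …, s, the vector k_i·γ_i belongs to the submonoid Γ_{i−1}(λ_1, …, λ_s). -/
def mixComb (n t : ℕ) (K : ℚ) (f : ℕ → Fin n → ℚ) : AddSubgroup (Fin n → ℚ) where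
  carrier := {x | ∃ (v : Fin n → ℤ) (c : ℕ → ℤ),
    x = K • (fun j => (v j : ℚ)) + ∑ m ∈ Finset.Icc 1 t, (c m : ℚ) • f m}
  zero_mem' := ⟨0, 0, by funext j; simp⟩
  add_mem' := by
    rintro x y ⟨v, c, rfl⟩ ⟨w, d, rfl⟩
    refine ⟨v + w, c + d, ?_⟩
    have hv : (fun j => (((v + w) j : ℤ) : ℚ)) = (fun j => (v j : ℚ)) + (fun j => (w j : ℚ)) := by
      funext j; simp
    have hc : ∑ m ∈ Finset.Icc 1 t, (((c + d) m : ℤ) : ℚ) • f m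
        = ∑ m ∈ Finset.Icc 1 t, (c m : ℚ) • f m + ∑ m ∈ Finset.Icc 1 t, (d m : ℚ) • f m := by
      rw [← Finset.sum_add_distrib]
      refine Finset.sum_congr rfl fun m _ => ?_
      simp [add_smul]
    rw [hv, smul_add, hc]; abel
  neg_mem' := by
    rintro x ⟨v, c, rfl⟩
    refine ⟨-v, -c, ?_⟩
    have hv : (fun j => (((-v) j : ℤ) : ℚ)) = -(fun j => (v j : ℚ)) := by funext j; simp
    have hc : ∑ m ∈ Finset.Icc 1 t, (((-c) m : ℤ) : ℚ) • f m
        = -∑ m ∈ Finset.Icc 1 t, (c m : ℚ) • f m := by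
      rw [← Finset.sum_neg_distrib]
      refine Finset.sum_congr rfl fun m _ => ?_
      simp
    rw [hv, hc, smul_neg]; abel

lemma mixComb_single {n t : ℕ} (K : ℚ) (f : ℕ → Fin n → ℚ) {m : ℕ}
    (h1 : 1 ≤ m) (h2 : m ≤ t) : f m ∈ mixComb n t K f := by
  refine ⟨0, fun m' => if m' = m then 1 else 0, ?_⟩
  have h : ∀ m' ∈ Finset.Icc 1 t, ((if m' = m then (1:ℤ) else 0 : ℤ) : ℚ) • f m'
      = if m' = m then f m' else 0 := by intro m' _; split <;> simp
  rw [Finset.sum_congr rfl h, Finset.sum_ite_eq' (Finset.Icc 1 t) m f,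
    if_pos (Finset.mem_Icc.mpr ⟨h1, h2⟩)]
  funext j; simp

lemma mixComb_intCast_smul {n t : ℕ} {K : ℚ} {f : ℕ → Fin n → ℚ} {x : Fin n → ℚ}
    (hx : x ∈ mixComb n t K f) (c : ℤ) : (c : ℚ) • x ∈ mixComb n t K f := by
  rw [Int.cast_smul_eq_zsmul]
  exact zsmul_mem hx c

lemma mixComb_lattice {n t : ℕ} (K : ℚ) (f : ℕ → Fin n → ℚ) (v : Fin n → ℤ) :
    K • (fun j => (v j : ℚ)) ∈ mixComb n t K f := ⟨v, 0, by funext j; simp⟩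

theorem stmt_6
    (n s : ℕ) (hn : 1 ≤ n) (hs : 1 ≤ s)
    (lam : ℕ → (Fin n → ℚ))
    (hlam_nonneg : ∀ i, 1 ≤ i → i ≤ s → 0 ≤ lam i)
    (hlam_mono : ∀ i, 1 ≤ i → i < s → lam i < lam (i + 1))
    (M : ℕ → AddSubgroup (Fin n → ℚ))
    (hM : ∀ i, M i = AddSubgroup.closure
      ({x : Fin n → ℚ | ∃ v : Fin n → ℤ, x = fun j => (v j : ℚ)} ∪ (lam '' Set.Icc 1 i)))
    (hlamM : ∀ i, 1 ≤ i → i ≤ s → lam i ∉ M (i - 1))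
    (kk : ℕ → ℕ)
    (hkk : ∀ i, 1 ≤ i → i ≤ s →
      IsLeast {m : ℕ | 0 < m ∧ (m : ℚ) • lam i ∈ M (i - 1)} (kk i))
    (e : ℕ → ℕ) (he0 : e 0 = 1)
    (he : ∀ i, 1 ≤ i → i ≤ s → e i = kk i * e (i - 1))
    (gam : ℕ → ℕ → (Fin n → ℚ))
    (hgam1 : ∀ i, 1 ≤ i → i ≤ s → gam i 1 = (e i : ℚ) • lam 1)
    (hgam : ∀ i, 1 ≤ i → i ≤ s → ∀ j, 1 ≤ j → j ≤ i - 1 →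
      gam i (j + 1) =
        (kk j : ℚ) • gam i j - (e i : ℚ) • lam j + (e i : ℚ) • lam (j + 1)) :
    ∀ i, 1 ≤ i → i ≤ s →
      (kk i : ℚ) • gam s i ∈ AddSubmonoid.closure
        ((Set.range fun j : Fin n => Pi.single j (e s : ℚ)) ∪ (gam s '' Set.Icc 1 (i - 1))) := by
  have hkkpos : ∀ m, 1 ≤ m → m ≤ s → 0 < kk m := fun m h1 h2 => (hkk m h1 h2).1.1
  have hepos : ∀ m, m ≤ s → 0 < e m := by
    intro m
    induction m with
    | zero => intro _; simp [he0]
    | succ m ih =>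
      intro hm
      rw [he (m+1) (by omega) hm]
      simp only [Nat.add_sub_cancel]
      exact Nat.mul_pos (hkkpos (m+1) (by omega) hm) (ih (by omega))
  -- nonnegativity of gam s j
  have hgnn : ∀ j, 1 ≤ j → j ≤ s → ∀ x, 0 ≤ gam s j x := by
    intro j
    induction j with
    | zero => intro h; omega
    | succ j ih =>
      intro _ hjs x
      rcases Nat.eq_zero_or_pos j with rfl | hj1
      · rw [hgam1 s hs le_rfl]
        have h0 := hlam_nonneg 1 le_rfl hs
        have h0x : (0:ℚ) ≤ lam 1 x := by simpa using h0 x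
        simp only [Pi.smul_apply, smul_eq_mul]
        positivity
      · rw [hgam s hs le_rfl j hj1 (by omega)]
        have hle : lam j x ≤ lam (j+1) x := (le_of_lt (hlam_mono j hj1 (by omega))) x
        have hg := ih hj1 (by omega) x
        simp only [Pi.add_apply, Pi.sub_apply, Pi.smul_apply, smul_eq_mul]
        have h1 : (0:ℚ) ≤ (kk j : ℚ) * gam s j x := by positivity
        have h2 : (0:ℚ) ≤ (e s : ℚ) * (lam (j+1) x - lam j x) := by
          have : (0:ℚ) ≤ lam (j+1) x - lam j x := by linarith
          positivity
        nlinarith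
  -- structure lemma for gam s j
  have hA : ∀ j, 1 ≤ j → j ≤ s →
      gam s j = (e s : ℚ) • lam j
        + ∑ m ∈ Finset.Icc 1 (j-1), ((kk m : ℚ) - 1) • gam s m := by
    intro j
    induction j with
    | zero => intro h; omega
    | succ j ih =>
      intro _ hjs
      rcases Nat.eq_zero_or_pos j with rfl | hj1
      · simp [hgam1 s hs le_rfl]
      · have hrec := hgam s hs le_rfl j hj1 (by omega)
        have hIH := ih hj1 (by omega)
        simp only [Nat.add_sub_cancel] at hIH ⊢
        have hexp : ∑ m ∈ Finset.Icc 1 (j-1), ((kk m : ℚ) - 1) • gam s m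
            = gam s j - (e s : ℚ) • lam j := by rw [hIH]; abel
        obtain ⟨m, rfl⟩ : ∃ m, j = m + 1 := ⟨j - 1, by omega⟩
        simp only [Nat.add_sub_cancel] at hexp
        rw [hrec, Finset.sum_Icc_succ_top (by omega : 1 ≤ m + 1), hexp, sub_smul, one_smul]
        abel
  -- e s • lam j lies in the gamma-subgroup
  have hlamG : ∀ t, t ≤ s → ∀ j, 1 ≤ j → j ≤ t →
      (e s : ℚ) • lam j ∈ mixComb n t (e s : ℚ) (gam s) := by
    intro t hts j hj1 hjt
    have h2 : (e s : ℚ) • lam j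
        = gam s j - ∑ m ∈ Finset.Icc 1 (j-1), ((kk m : ℚ) - 1) • gam s m := by
      rw [hA j hj1 (le_trans hjt hts)]; abel
    rw [h2]
    refine sub_mem (mixComb_single _ _ hj1 hjt) (sum_mem fun m hm => ?_)
    simp only [Finset.mem_Icc] at hm
    have hc : ((kk m : ℚ) - 1) = (((kk m : ℤ) - 1 : ℤ) : ℚ) := by push_cast; ring
    rw [hc]
    exact mixComb_intCast_smul (mixComb_single _ _ hm.1 (by omega)) _
  -- key: kk p • gam s p lies in the gamma-subgroup of level p-1
  have hB : ∀ p, 1 ≤ p → p ≤ s →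
      (kk p : ℚ) • gam s p ∈ mixComb n (p-1) (e s : ℚ) (gam s) := by
    intro p hp1 hps
    have hmem : (kk p : ℚ) • lam p ∈ M (p-1) := (hkk p hp1 hps).1.2
    have hle : M (p-1) ≤ mixComb n (p-1) 1 lam := by
      rw [hM]
      rw [AddSubgroup.closure_le]
      rintro x (⟨v, rfl⟩ | ⟨m, hm, rfl⟩)
      · exact ⟨v, 0, by funext j; simp⟩
      · exact mixComb_single _ _ hm.1 hm.2
    obtain ⟨z, c, hz⟩ := hle hmem
    rw [one_smul] at hz
    rw [hA p hp1 hps, smul_add]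
    refine add_mem ?_ ?_
    · rw [smul_comm, hz, smul_add]
      refine add_mem (mixComb_lattice _ _ z) ?_
      rw [Finset.smul_sum]
      refine sum_mem fun m hm => ?_
      simp only [Finset.mem_Icc] at hm
      rw [smul_comm]
      exact mixComb_intCast_smul (hlamG (p-1) (by omega) m hm.1 hm.2) _
    · rw [Finset.smul_sum]
      refine sum_mem fun m hm => ?_
      simp only [Finset.mem_Icc] at hm
      have h1 : (kk p : ℚ) • (((kk m : ℚ) - 1) • gam s m)
          = (((kk p : ℤ) * ((kk m : ℤ) - 1) : ℤ) : ℚ) • gam s m := by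
        rw [smul_smul]; congr 1; push_cast; ring
      rw [h1]
      exact mixComb_intCast_smul (mixComb_single _ _ hm.1 (by omega)) _
  -- normalization
  have hN : ∀ t, t ≤ s - 1 → ∀ x, x ∈ mixComb n t (e s : ℚ) (gam s) →
      ∃ (v : Fin n → ℤ) (a : ℕ → ℤ),
        (∀ m, 1 ≤ m → m ≤ t → 0 ≤ a m ∧ a m < (kk m : ℤ)) ∧
        x = (e s : ℚ) • (fun j => (v j : ℚ))
          + ∑ m ∈ Finset.Icc 1 t, (a m : ℚ) • gam s m := by
    intro t
    induction t with
    | zero =>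
      intro _ x hx
      obtain ⟨v, c, hvc⟩ := hx
      exact ⟨v, 0, fun m h1 h2 => by omega, by simpa using hvc⟩
    | succ t ih =>
      intro hts x hx
      obtain ⟨v, c, hvc⟩ := hx
      have hktpos : (0:ℤ) < (kk (t+1) : ℤ) := by
        exact_mod_cast hkkpos (t+1) (by omega) (by omega)
      set r : ℤ := c (t+1) % (kk (t+1) : ℤ) with hr
      set q : ℤ := c (t+1) / (kk (t+1) : ℤ) with hq
      have hr1 : 0 ≤ r := Int.emod_nonneg _ (by omega)
      have hr2 : r < (kk (t+1) : ℤ) := Int.emod_lt_of_pos _ hktpos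
      have hcq : c (t+1) = (kk (t+1) : ℤ) * q + r := (Int.mul_ediv_add_emod _ _).symm
      have hmem : x - (r : ℚ) • gam s (t+1) ∈ mixComb n t (e s : ℚ) (gam s) := by
        have hc' : (c (t+1) : ℚ) = (q : ℚ) * (kk (t+1) : ℚ) + (r : ℚ) := by
          rw [hcq]; push_cast; ring
        have hsplit : x - (r : ℚ) • gam s (t+1)
            = ((e s : ℚ) • (fun j => (v j : ℚ))
                + ∑ m ∈ Finset.Icc 1 t, (c m : ℚ) • gam s m)
              + (q : ℚ) • ((kk (t+1) : ℚ) • gam s (t+1)) := by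
          rw [hvc, Finset.sum_Icc_succ_top (by omega : 1 ≤ t + 1), hc', add_smul, mul_smul]
          abel
        rw [hsplit]
        exact add_mem ⟨v, c, rfl⟩ (mixComb_intCast_smul (hB (t+1) (by omega) (by omega)) q)
      obtain ⟨v', a, hbound, heq⟩ := ih (by omega) _ hmem
      refine ⟨v', fun m => if m = t+1 then r else a m, ?_, ?_⟩
      · intro m h1 h2
        by_cases hmt : m = t+1
        · subst hmt; simp only [if_pos rfl]; exact ⟨hr1, hr2⟩
        · have := hbound m h1 (by omega)
          simpa [hmt] using this
      · rw [Finset.sum_Icc_succ_top (by omega : 1 ≤ t + 1)]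
        have hsc : ∑ m ∈ Finset.Icc 1 t, ((if m = t+1 then r else a m : ℤ) : ℚ) • gam s m
            = ∑ m ∈ Finset.Icc 1 t, (a m : ℚ) • gam s m := by
          refine Finset.sum_congr rfl fun m hm => ?_
          simp only [Finset.mem_Icc] at hm
          rw [if_neg (by omega)]
        rw [hsc, show ((fun m => if m = t+1 then r else a m) (t+1) : ℤ) = r from if_pos rfl,
          ← add_assoc, ← heq]
        abel
  -- final assembly
  intro i hi1 his
  obtain ⟨v, a, hbound, heq⟩ := hN (i-1) (by omega) _ (hB i hi1 his)
  have hK0 : (0:ℚ) < (e s : ℚ) := by exact_mod_cast hepos s le_rfl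
  have hvnn : ∀ x, 0 ≤ v x := by
    intro x
    have heqx : (kk i : ℚ) * gam s i x
        = (e s : ℚ) * (v x : ℚ) + ∑ m ∈ Finset.Icc 1 (i-1), (a m : ℚ) * gam s m x := by
      have h := congrFun heq x
      simpa [Finset.sum_apply] using h
    have hAx : gam s i x
        = (e s : ℚ) * lam i x + ∑ m ∈ Finset.Icc 1 (i-1), ((kk m : ℚ) - 1) * gam s m x := by
      have h := congrFun (hA i hi1 his) x
      simpa [Finset.sum_apply] using h
    have hsum_le : ∑ m ∈ Finset.Icc 1 (i-1), (a m : ℚ) * gam s m x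
        ≤ ∑ m ∈ Finset.Icc 1 (i-1), ((kk m : ℚ) - 1) * gam s m x := by
      refine Finset.sum_le_sum fun m hm => ?_
      simp only [Finset.mem_Icc] at hm
      have hb := hbound m hm.1 hm.2
      have hg := hgnn m hm.1 (by omega) x
      have hab : (a m : ℚ) ≤ (kk m : ℚ) - 1 := by
        have : (a m : ℤ) ≤ (kk m : ℤ) - 1 := by omega
        exact_mod_cast this
      exact mul_le_mul_of_nonneg_right hab hg
    have hlamnn : (0:ℚ) ≤ lam i x := by simpa using (hlam_nonneg i hi1 his) x
    have hkk1 : (1:ℚ) ≤ (kk i : ℚ) := by exact_mod_cast hkkpos i hi1 his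
    have hgix := hgnn i hi1 his x
    have hp : gam s i x ≤ (kk i : ℚ) * gam s i x := by nlinarith
    have hlp : (0:ℚ) ≤ (e s : ℚ) * lam i x := by positivity
    have h1 : (0:ℚ) ≤ (e s : ℚ) * (v x : ℚ) := by linarith
    have h2 : (0:ℚ) ≤ (v x : ℚ) := by
      by_contra hcon
      push_neg at hcon
      nlinarith
    exact_mod_cast h2
  rw [heq]
  refine AddSubmonoid.add_mem _ ?_ ?_
  · have hrepr : (e s : ℚ) • (fun j => ((v j : ℤ) : ℚ))
        = ∑ j : Fin n, (v j).toNat • Pi.single j (e s : ℚ) := by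
      funext x
      rw [Finset.sum_apply]
      have hterm : ∀ j : Fin n, (((v j).toNat • Pi.single j (e s : ℚ) : Fin n → ℚ)) x
          = if x = j then ((v j).toNat : ℚ) * (e s : ℚ) else 0 := by
        intro j
        rw [Pi.smul_apply, Pi.single_apply]
        split <;> simp
      rw [Finset.sum_congr rfl fun j _ => hterm j,
        Finset.sum_ite_eq Finset.univ x (fun j => ((v j).toNat : ℚ) * (e s : ℚ)),
        if_pos (Finset.mem_univ x)]
      have hc : ((v x).toNat : ℚ) = ((v x : ℤ) : ℚ) := by
        exact_mod_cast congrArg (fun z : ℤ => (z : ℚ)) (Int.toNat_of_nonneg (hvnn x))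
      rw [hc]
      simp only [Pi.smul_apply, smul_eq_mul]
      ring
    rw [hrepr]
    refine AddSubmonoid.sum_mem _ fun j _ => ?_
    have hx : Pi.single j (e s : ℚ) ∈ (Set.range fun j : Fin n => Pi.single j (e s : ℚ))
        ∪ (gam s '' Set.Icc 1 (i - 1)) := Or.inl ⟨j, rfl⟩
    exact AddSubmonoid.nsmul_mem _ (AddSubmonoid.subset_closure hx) _
  · refine AddSubmonoid.sum_mem _ fun m hm => ?_
    simp only [Finset.mem_Icc] at hm
    have hb := hbound m hm.1 hm.2
    have hc : ((a m : ℤ) : ℚ) = (((a m).toNat : ℕ) : ℚ) := by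
      exact_mod_cast (Int.toNat_of_nonneg hb.1).symm
    rw [hc, Nat.cast_smul_eq_nsmul]
    have hx : gam s m ∈ (Set.range fun j : Fin n => Pi.single j (e s : ℚ))
        ∪ (gam s '' Set.Icc 1 (i - 1)) := Or.inr ⟨m, Set.mem_Icc.mpr ⟨hm.1, hm.2⟩, rfl⟩
    exact AddSubmonoid.nsmul_mem _ (AddSubmonoid.subset_closure hx) _
end

section
/- Assume s ≥ 2. For every i = 1, …, s−1, the vector e_{i−1}·γ_s − e_{s−1}·γ_i is strictly positive in the componentwise partial order, i.e., e_{i−1}·γ_s − e_{s−1}·γ_i ≥ 0 in every component and is nonzero. -/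
theorem stmt_7
    (n s : ℕ) (hn : 1 ≤ n) (hs : 1 ≤ s)
    (lam : ℕ → (Fin n → ℚ))
    (hlam_nonneg : ∀ i, 1 ≤ i → i ≤ s → 0 ≤ lam i)
    (hlam_mono : ∀ i, 1 ≤ i → i < s → lam i < lam (i + 1))
    (M : ℕ → AddSubgroup (Fin n → ℚ))
    (hM : ∀ i, M i = AddSubgroup.closure
      ({x : Fin n → ℚ | ∃ v : Fin n → ℤ, x = fun j => (v j : ℚ)} ∪ (lam '' Set.Icc 1 i)))
    (hlamM : ∀ i, 1 ≤ i → i ≤ s → lam i ∉ M (i - 1))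
    (kk : ℕ → ℕ)
    (hkk : ∀ i, 1 ≤ i → i ≤ s →
      IsLeast {m : ℕ | 0 < m ∧ (m : ℚ) • lam i ∈ M (i - 1)} (kk i))
    (e : ℕ → ℕ) (he0 : e 0 = 1)
    (he : ∀ i, 1 ≤ i → i ≤ s → e i = kk i * e (i - 1))
    (gam : ℕ → ℕ → (Fin n → ℚ))
    (hgam1 : ∀ i, 1 ≤ i → i ≤ s → gam i 1 = (e i : ℚ) • lam 1)
    (hgam : ∀ i, 1 ≤ i → i ≤ s → ∀ j, 1 ≤ j → j ≤ i - 1 →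
      gam i (j + 1) =
        (kk j : ℚ) • gam i j - (e i : ℚ) • lam j + (e i : ℚ) • lam (j + 1))
    (hs2 : 2 ≤ s) :
    ∀ i, 1 ≤ i → i ≤ s - 1 →
      0 < (e (i - 1) : ℚ) • gam s s - (e (s - 1) : ℚ) • gam s i := by
  have hkpos : ∀ j, 1 ≤ j → j ≤ s → 0 < kk j := fun j h1 h2 => (hkk j h1 h2).1.1
  have hepos : ∀ m, m ≤ s → 0 < e m := by
    intro m
    induction m with
    | zero => intro _; simp [he0]
    | succ t ih =>
      intro hm
      rw [he (t + 1) (by omega) hm]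
      simp only [Nat.add_sub_cancel]
      exact Nat.mul_pos (hkpos (t + 1) (by omega) hm) (ih (by omega))
  intro i hi1 his
  have key : ∀ j, i ≤ j → j ≤ s →
      0 ≤ (e (i - 1) : ℚ) • gam s j - (e (j - 1) : ℚ) • gam s i ∧
      (i < j → 0 < (e (i - 1) : ℚ) • gam s j - (e (j - 1) : ℚ) • gam s i) := by
    intro j
    induction j with
    | zero => intro h1 h2; omega
    | succ t ih =>
      intro h1 h2
      by_cases hti : t < i
      · have hti' : t + 1 = i := by omega
        rw [hti']
        simp only [sub_self]
        exact ⟨le_refl _, fun h => absurd h (lt_irrefl i)⟩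
      · have hit : i ≤ t := le_of_not_gt hti
        have h1t : 1 ≤ t := by omega
        have hgs := hgam s (by omega) le_rfl t h1t (by omega)
        have hej := he t h1t (by omega)
        have hD : (e (i - 1) : ℚ) • gam s (t + 1) - (e (t + 1 - 1) : ℚ) • gam s i
            = (kk t : ℚ) • ((e (i - 1) : ℚ) • gam s t - (e (t - 1) : ℚ) • gam s i)
              + ((e (i - 1) * e s : ℕ) : ℚ) • (lam (t + 1) - lam t) := by
          simp only [Nat.add_sub_cancel]
          rw [hgs, hej]
          push_cast
          module
        have hDt := ih hit (by omega)
        have h1 : (0 : Fin n → ℚ) ≤ (kk t : ℚ) •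
            ((e (i - 1) : ℚ) • gam s t - (e (t - 1) : ℚ) • gam s i) :=
          smul_nonneg (by positivity) hDt.1
        have h2' : (0 : Fin n → ℚ) < ((e (i - 1) * e s : ℕ) : ℚ) • (lam (t + 1) - lam t) := by
          have hc : (0 : ℚ) < ((e (i - 1) * e s : ℕ) : ℚ) := by
            have := Nat.mul_pos (hepos (i - 1) (by omega)) (hepos s le_rfl)
            exact_mod_cast this
          have hl : (0 : Fin n → ℚ) < lam (t + 1) - lam t :=
            sub_pos.mpr (hlam_mono t h1t (by omega))
          exact smul_pos hc hl
        have hpos : (0 : Fin n → ℚ) < (e (i - 1) : ℚ) • gam s (t + 1)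
            - (e (t + 1 - 1) : ℚ) • gam s i := by
          rw [hD]
          exact add_pos_of_nonneg_of_pos h1 h2'
        exact ⟨le_of_lt hpos, fun _ => hpos⟩
  exact (key s (by omega) le_rfl).2 (by omega)
end

section
/- Fix 1 ≤ i ≤ s. Define m: ℝ^i → ℝ by m(x_0, …, x_{i−1}) = Σ_{ℓ=0}^{i−1} e_ℓ·x_ℓ, and let R = {(x_0, …, x_{i−1}) ∈ ℝ^i : x_ℓ ≥ 0 for all ℓ, and Σ_{ℓ=0}^{i−1} γ_{ℓ+1}^{(i)}·x_ℓ ≥ k_i·γ_i^{(i)}}. Then m attains a minimum on R, this minimum equals e_i, and it is attained only at the point (0, …, 0, k_i). -/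
/-! Put `q ℓ = γ_{ℓ+1}^{(i)} / e_ℓ`. The recursion for `γ` reads
`q ℓ = q (ℓ-1) + e_i (λ_{ℓ+1} - λ_ℓ) / e_ℓ`, so `q` is strictly increasing and its maximum
`r = q (i-1) = γ_i^{(i)} / e_{i-1}` is attained only at `ℓ = i-1`. On `R` this gives
`r · m(x) ≥ ∑ γ_{ℓ+1}^{(i)} x_ℓ ≥ k_i γ_i^{(i)} = r e_i`, and equality forces `x_ℓ = 0` whenever
`q ℓ < r`, i.e. for every `ℓ < i-1`. -/

open Finset

section LinearProgram

variable {ι : Type*} [Fintype ι] {a b x : ι → ℝ} {t : ℝ} {j : ι}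

theorem le_sum_mul_of_div_le (ha : ∀ ℓ, 0 < a ℓ) (hbj : 0 < b j)
    (hb : ∀ ℓ, b ℓ / a ℓ ≤ b j / a j) (hx : ∀ ℓ, 0 ≤ x ℓ)
    (hcon : t * b j ≤ ∑ ℓ, b ℓ * x ℓ) : t * a j ≤ ∑ ℓ, a ℓ * x ℓ := by
  set r := b j / a j with hr
  refine le_of_mul_le_mul_left ?_ (div_pos hbj (ha j))
  calc r * (t * a j) = t * b j := by rw [hr]; field_simp [(ha j).ne']
    _ ≤ ∑ ℓ, b ℓ * x ℓ := hcon
    _ ≤ ∑ ℓ, r * (a ℓ * x ℓ) := sum_le_sum fun ℓ _ => by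
      rw [← mul_assoc]
      exact mul_le_mul_of_nonneg_right ((div_le_iff₀ (ha ℓ)).1 (hb ℓ)) (hx ℓ)
    _ = r * ∑ ℓ, a ℓ * x ℓ := (mul_sum ..).symm

theorem eq_single_of_sum_mul_eq [DecidableEq ι] (ha : ∀ ℓ, 0 < a ℓ)
    (hb : ∀ ℓ ≠ j, b ℓ / a ℓ < b j / a j) (hx : ∀ ℓ, 0 ≤ x ℓ)
    (hcon : t * b j ≤ ∑ ℓ, b ℓ * x ℓ) (hsum : ∑ ℓ, a ℓ * x ℓ = t * a j) :
    x = Pi.single j t := by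
  set r := b j / a j with hr
  have hrj : r * a j = b j := div_mul_cancel₀ _ (ha j).ne'
  have hslack : ∀ ℓ, 0 ≤ (r * a ℓ - b ℓ) * x ℓ := by
    refine fun ℓ => mul_nonneg (sub_nonneg.2 ?_) (hx ℓ)
    rcases eq_or_ne ℓ j with rfl | hℓ
    · exact hrj.ge
    · exact ((div_lt_iff₀ (ha ℓ)).1 (hb ℓ hℓ)).le
  have htotal : ∑ ℓ, (r * a ℓ - b ℓ) * x ℓ = 0 := by
    refine le_antisymm ?_ (sum_nonneg fun ℓ _ => hslack ℓ)
    calc ∑ ℓ, (r * a ℓ - b ℓ) * x ℓ = r * ∑ ℓ, a ℓ * x ℓ - ∑ ℓ, b ℓ * x ℓ := by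
          simp only [sub_mul, mul_assoc, sum_sub_distrib, mul_sum]
      _ = t * b j - ∑ ℓ, b ℓ * x ℓ := by rw [hsum, ← hrj]; ring
      _ ≤ 0 := sub_nonpos.2 hcon
  have hoff : ∀ ℓ ≠ j, x ℓ = 0 := fun ℓ hℓ =>
    have hterm := (sum_eq_zero_iff_of_nonneg fun ℓ _ => hslack ℓ).1 htotal ℓ (mem_univ ℓ)
    (mul_eq_zero.1 hterm).resolve_left (sub_pos.2 ((div_lt_iff₀ (ha ℓ)).1 (hb ℓ hℓ))).ne'
  have hxj : x j = t := by
    rw [sum_eq_single j (fun ℓ _ hℓ => by rw [hoff ℓ hℓ, mul_zero]) (by simp), mul_comm] at hsum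
    exact mul_right_cancel₀ (ha j).ne' hsum
  funext ℓ
  rcases eq_or_ne ℓ j with rfl | hℓ
  · simp [hxj]
  · simp [hoff ℓ hℓ, hℓ]

theorem isLeast_sum_mul_image (ha : ∀ ℓ, 0 < a ℓ) (hbj : 0 < b j)
    (hb : ∀ ℓ, b ℓ / a ℓ ≤ b j / a j) (ht : 0 ≤ t) :
    IsLeast ((fun x : ι → ℝ => ∑ ℓ, a ℓ * x ℓ) ''
      {x : ι → ℝ | (∀ ℓ, 0 ≤ x ℓ) ∧ t * b j ≤ ∑ ℓ, b ℓ * x ℓ}) (t * a j) := by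
  classical
  refine ⟨⟨Pi.single j t, ⟨fun ℓ => ?_, ?_⟩, ?_⟩, ?_⟩
  · rcases eq_or_ne ℓ j with rfl | hℓ
    · simpa using ht
    · simp [hℓ]
  · simp [Pi.single_apply, mul_comm]
  · simp [Pi.single_apply, mul_comm]
  · rintro _ ⟨x, ⟨hx, hcon⟩, rfl⟩
    exact le_sum_mul_of_div_le ha hbj hb hx hcon

end LinearProgram

theorem div_lt_mul_add_div_mul {K : Type*} [Field K] [LinearOrder K] [IsStrictOrderedRing K]
    {g d e k : K} (hk : 0 < k) (he : 0 < e) (hd : 0 < d) : g / e < (k * g + d) / (k * e) := by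
  rw [add_div, mul_div_mul_left g e hk.ne']
  exact lt_add_of_pos_right _ (div_pos hd (mul_pos hk he))

theorem pos_of_eq_mul_pred {s : ℕ} {kk e : ℕ → ℕ} (he0 : e 0 = 1)
    (hkk : ∀ i, 1 ≤ i → i ≤ s → 0 < kk i) (he : ∀ i, 1 ≤ i → i ≤ s → e i = kk i * e (i - 1)) :
    ∀ i ≤ s, 0 < e i
  | 0, _ => he0 ▸ Nat.one_pos
  | i + 1, hi => by
    rw [he (i + 1) (by omega) hi]
    exact Nat.mul_pos (hkk _ (by omega) hi) (pos_of_eq_mul_pred he0 hkk he i (by omega))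

theorem strictMonoOn_gam_div {s i : ℕ} {lam : ℕ → ℚ} {kk e : ℕ → ℕ} {gam : ℕ → ℕ → ℚ}
    (hlam_mono : ∀ ℓ, 1 ≤ ℓ → ℓ < s → lam ℓ < lam (ℓ + 1))
    (hkk : ∀ ℓ, 1 ≤ ℓ → ℓ ≤ s → 0 < kk ℓ) (hepos : ∀ ℓ ≤ s, 0 < e ℓ)
    (he : ∀ ℓ, 1 ≤ ℓ → ℓ ≤ s → e ℓ = kk ℓ * e (ℓ - 1))
    (hgam : ∀ ℓ, 1 ≤ ℓ → ℓ ≤ i - 1 →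
      gam i (ℓ + 1) = (kk ℓ : ℚ) * gam i ℓ - (e i : ℚ) * lam ℓ + (e i : ℚ) * lam (ℓ + 1))
    (his : i ≤ s) :
    StrictMonoOn (fun ℓ => gam i (ℓ + 1) / e ℓ) (Set.Iic (i - 1)) := by
  refine strictMonoOn_Iic_of_lt_succ fun ℓ hℓ => ?_
  rw [Order.succ_eq_add_one, hgam (ℓ + 1) (by omega) (by omega), he (ℓ + 1) (by omega) (by omega),
    Nat.add_sub_cancel, Nat.cast_mul,
    show ∀ u v w : ℚ, u - w * v + w * lam (ℓ + 1 + 1) = u + w * (lam (ℓ + 1 + 1) - v) by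
      intros; ring]
  exact div_lt_mul_add_div_mul (by exact_mod_cast hkk _ (by omega) (by omega))
    (by exact_mod_cast hepos ℓ (by omega))
    (mul_pos (by exact_mod_cast hepos i his) (sub_pos.2 (hlam_mono _ (by omega) (by omega))))

theorem gam_succ_pos {i : ℕ} {lam : ℕ → ℚ} {e : ℕ → ℕ} {gam : ℕ → ℕ → ℚ} (hlam1 : 0 < lam 1)
    (hepos : ∀ ℓ ≤ i, 0 < e ℓ) (hgam1 : gam i 1 = e i * lam 1)
    (hq : MonotoneOn (fun ℓ => gam i (ℓ + 1) / e ℓ) (Set.Iic (i - 1))) {ℓ : ℕ} (hℓ : ℓ ≤ i - 1) :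
    0 < gam i (ℓ + 1) := by
  have hq0 : 0 < gam i (0 + 1) / e 0 := by
    rw [zero_add, hgam1]
    exact div_pos (mul_pos (by exact_mod_cast hepos i le_rfl) hlam1)
      (by exact_mod_cast hepos 0 (Nat.zero_le _))
  have hqℓ := hq0.trans_le (hq (Set.mem_Iic.2 (Nat.zero_le _)) hℓ (Nat.zero_le _))
  exact (div_pos_iff_of_pos_right (by exact_mod_cast hepos ℓ (by omega))).1 hqℓ

theorem stmt_9_general
    (s : ℕ)
    (lam : ℕ → ℚ) (hlam1 : 1 < lam 1)
    (hlam_mono : ∀ i, 1 ≤ i → i < s → lam i < lam (i + 1))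
    (M : ℕ → AddSubgroup ℚ)
    (kk : ℕ → ℕ)
    (hkk : ∀ i, 1 ≤ i → i ≤ s →
      IsLeast {m : ℕ | 0 < m ∧ (m : ℚ) * lam i ∈ M (i - 1)} (kk i))
    (e : ℕ → ℕ) (he0 : e 0 = 1)
    (he : ∀ i, 1 ≤ i → i ≤ s → e i = kk i * e (i - 1))
    (gam : ℕ → ℕ → ℚ)
    (hgam1 : ∀ j, 1 ≤ j → j ≤ s → gam j 1 = (e j : ℚ) * lam 1)
    (hgam : ∀ j, 1 ≤ j → j ≤ s → ∀ ℓ, 1 ≤ ℓ → ℓ ≤ j - 1 →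
      gam j (ℓ + 1) = (kk ℓ : ℚ) * gam j ℓ - (e j : ℚ) * lam ℓ + (e j : ℚ) * lam (ℓ + 1)) :
    ∀ i, 1 ≤ i → i ≤ s →
      IsLeast ((fun x : Fin i → ℝ => ∑ ℓ : Fin i, (e (ℓ : ℕ) : ℝ) * x ℓ) ''
          {x : Fin i → ℝ | (∀ ℓ, 0 ≤ x ℓ) ∧
            ((kk i : ℝ) * (gam i i : ℝ) ≤
              ∑ ℓ : Fin i, (gam i ((ℓ : ℕ) + 1) : ℝ) * x ℓ)})
        (e i : ℝ) ∧
      ∀ x : Fin i → ℝ, (∀ ℓ, 0 ≤ x ℓ) →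
        ((kk i : ℝ) * (gam i i : ℝ) ≤ ∑ ℓ : Fin i, (gam i ((ℓ : ℕ) + 1) : ℝ) * x ℓ) →
        (∑ ℓ : Fin i, (e (ℓ : ℕ) : ℝ) * x ℓ) = (e i : ℝ) →
        x = fun ℓ : Fin i => if (ℓ : ℕ) = i - 1 then (kk i : ℝ) else 0 := by
  intro i hi1 his
  have hkpos : ∀ ℓ, 1 ≤ ℓ → ℓ ≤ s → 0 < kk ℓ := fun ℓ h1 h2 => (hkk ℓ h1 h2).1.1
  have hepos := pos_of_eq_mul_pred he0 hkpos he
  have hq := strictMonoOn_gam_div hlam_mono hkpos hepos he (hgam i hi1 his) his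
  set j : Fin i := ⟨i - 1, by omega⟩
  have ha : ∀ ℓ : Fin i, (0 : ℝ) < e ℓ := fun ℓ => by exact_mod_cast hepos ℓ (by omega)
  have hb : ∀ ℓ ≠ j, (gam i (ℓ + 1) : ℝ) / e ℓ < gam i (j + 1) / e j := fun ℓ hℓ => by
    have hlt : (ℓ : ℕ) < i - 1 := by have := Fin.val_ne_of_ne hℓ; simp [j] at this; omega
    exact_mod_cast hq (Set.mem_Iic.2 hlt.le) (Set.mem_Iic.2 le_rfl) hlt
  have hbj : (0 : ℝ) < gam i (j + 1) := by
    exact_mod_cast gam_succ_pos (by linarith) (fun ℓ hℓ => hepos ℓ (hℓ.trans his))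
      (hgam1 i hi1 his) hq.monotoneOn le_rfl
  have hmax : ∀ ℓ : Fin i, (gam i (ℓ + 1) : ℝ) / e ℓ ≤ gam i (j + 1) / e j := fun ℓ =>
    (eq_or_ne ℓ j).elim (fun h => h ▸ le_rfl) fun hℓ => (hb ℓ hℓ).le
  rw [show (gam i i : ℝ) = gam i (j + 1) by simp [j, Nat.sub_add_cancel hi1],
    show (e i : ℝ) = kk i * e j by exact_mod_cast he i hi1 his]
  refine ⟨isLeast_sum_mul_image ha hbj hmax (Nat.cast_nonneg _), fun x hx hcon hsum => ?_⟩
  · rw [eq_single_of_sum_mul_eq ha hb hx hcon hsum]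
    funext ℓ
    simp [Pi.single_apply, j, Fin.ext_iff]

theorem stmt_9
    (s : ℕ) (hs : 1 ≤ s)
    (lam : ℕ → ℚ) (hlam1 : 1 < lam 1)
    (hlam_mono : ∀ i, 1 ≤ i → i < s → lam i < lam (i + 1))
    (M : ℕ → AddSubgroup ℚ)
    (hM : ∀ i, M i = AddSubgroup.closure ({1} ∪ lam '' Set.Icc 1 i))
    (hlamM : ∀ i, 1 ≤ i → i ≤ s → lam i ∉ M (i - 1))
    (kk : ℕ → ℕ)
    (hkk : ∀ i, 1 ≤ i → i ≤ s →
      IsLeast {m : ℕ | 0 < m ∧ (m : ℚ) * lam i ∈ M (i - 1)} (kk i))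
    (e : ℕ → ℕ) (he0 : e 0 = 1)
    (he : ∀ i, 1 ≤ i → i ≤ s → e i = kk i * e (i - 1))
    (gam : ℕ → ℕ → ℚ)
    (hgam1 : ∀ j, 1 ≤ j → j ≤ s → gam j 1 = (e j : ℚ) * lam 1)
    (hgam : ∀ j, 1 ≤ j → j ≤ s → ∀ ℓ, 1 ≤ ℓ → ℓ ≤ j - 1 →
      gam j (ℓ + 1) = (kk ℓ : ℚ) * gam j ℓ - (e j : ℚ) * lam ℓ + (e j : ℚ) * lam (ℓ + 1)) :
    ∀ i, 1 ≤ i → i ≤ s →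
      IsLeast ((fun x : Fin i → ℝ => ∑ ℓ : Fin i, (e (ℓ : ℕ) : ℝ) * x ℓ) ''
          {x : Fin i → ℝ | (∀ ℓ, 0 ≤ x ℓ) ∧
            ((kk i : ℝ) * (gam i i : ℝ) ≤
              ∑ ℓ : Fin i, (gam i ((ℓ : ℕ) + 1) : ℝ) * x ℓ)})
        (e i : ℝ) ∧
      ∀ x : Fin i → ℝ, (∀ ℓ, 0 ≤ x ℓ) →
        ((kk i : ℝ) * (gam i i : ℝ) ≤ ∑ ℓ : Fin i, (gam i ((ℓ : ℕ) + 1) : ℝ) * x ℓ) →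
        (∑ ℓ : Fin i, (e (ℓ : ℕ) : ℝ) * x ℓ) = (e i : ℝ) →
        x = fun ℓ : Fin i => if (ℓ : ℕ) = i - 1 then (kk i : ℝ) else 0 :=
  stmt_9_general s lam hlam1 hlam_mono M kk hkk e he0 he gam hgam1 hgam
end
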